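/- arXiv:1803.03469 — 4 statements merged into one kernel-verified Lean document; each statement's English description precedes it below -/
import Mathlib

section
/- (Pseudo-inverse stability of empirical CDFs, proved within the proof of Theorem 5.1) Let F : ℝ → [0,1] be a continuous cumulative distribution function, and let F̂ : ℝ → [0,1] be any nondecreasing right-continuous distribution function with quantile function ĝ(q) = inf{x ∈ ℝ : q ≤ F̂(x)}. Then for every q ∈ (0,1), |F(ĝ(q)) − q| ≤ 2 · sup_{x ∈ ℝ} |F̂(x) − F(x)|. -/
open MeasureTheory Filter

/-- Pseudo-inverse stability of empirical CDFs (proved within the proof of Theorem 5.1):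
if `F` is a continuous CDF and `F̂` is any CDF with quantile function
`ĝ(q) = inf {x | q ≤ F̂ x}`, then `|F(ĝ(q)) − q| ≤ 2 sup_x |F̂ x − F x|` for `q ∈ (0,1)`. -/
theorem pseudoInverse_stability
    (F Fhat : ℝ → ℝ)
    -- `F` is a continuous cumulative distribution function
    (hF_mono : Monotone F) (hF_cont : Continuous F)
    (hF_range : ∀ x, F x ∈ Set.Icc (0:ℝ) 1)
    (hF_bot : Tendsto F atBot (nhds 0)) (hF_top : Tendsto F atTop (nhds 1))
    -- `F̂` is a (nondecreasing, right-continuous) cumulative distribution function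
    (hFhat_mono : Monotone Fhat)
    (hFhat_rightCont : ∀ x, ContinuousWithinAt Fhat (Set.Ici x) x)
    (hFhat_range : ∀ x, Fhat x ∈ Set.Icc (0:ℝ) 1)
    (hFhat_bot : Tendsto Fhat atBot (nhds 0)) (hFhat_top : Tendsto Fhat atTop (nhds 1))
    -- `ĝ` is the quantile function (right pseudo-inverse) of `F̂`
    (ghat : ℝ → ℝ) (hghat : ∀ q, ghat q = sInf {x : ℝ | q ≤ Fhat x})
    (q : ℝ) (hq : q ∈ Set.Ioo (0:ℝ) 1) :
    |F (ghat q) - q| ≤ 2 * ⨆ x : ℝ, |Fhat x - F x| := by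
  obtain ⟨hq0, hq1⟩ := hq
  set S := {x : ℝ | q ≤ Fhat x} with hS
  have hbdd : BddAbove (Set.range fun x => |Fhat x - F x|) := by
    refine ⟨2, ?_⟩
    rintro _ ⟨x, rfl⟩
    obtain ⟨h1, h2⟩ := hF_range x
    obtain ⟨h3, h4⟩ := hFhat_range x
    rw [abs_le]; constructor <;> linarith
  set ε := ⨆ x : ℝ, |Fhat x - F x| with hεdef
  have hε : ∀ x, |Fhat x - F x| ≤ ε := fun x => le_ciSup hbdd x
  have hε0 : (0:ℝ) ≤ ε := le_trans (abs_nonneg _) (hε 0)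
  have hSne : S.Nonempty := by
    obtain ⟨x, hx⟩ := (hFhat_top.eventually (eventually_gt_nhds hq1)).exists
    exact ⟨x, hx.le⟩
  have hSbdd : BddBelow S := by
    obtain ⟨b, hb⟩ := eventually_atBot.1 (hFhat_bot.eventually (eventually_lt_nhds hq0))
    refine ⟨b, fun s hs => ?_⟩
    by_contra h
    push_neg at h
    exact absurd hs (not_le.2 (hb s h.le))
  set g := sInf S with hg
  have hgS : ∀ x, g < x → q ≤ Fhat x := by
    intro x hx
    obtain ⟨s, hsS, hsx⟩ := exists_lt_of_csInf_lt hSne hx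
    exact le_trans hsS (hFhat_mono hsx.le)
  have hq_le : q ≤ Fhat g := by
    have htend : Tendsto Fhat (nhdsWithin g (Set.Ioi g)) (nhds (Fhat g)) :=
      (hFhat_rightCont g).mono_left (nhdsWithin_mono _ Set.Ioi_subset_Ici_self)
    exact ge_of_tendsto htend (eventually_nhdsWithin_of_forall fun x hx => hgS x hx)
  have hx_lt : ∀ x < g, F x ≤ q + ε := by
    intro x hx
    have hxq : Fhat x < q := by
      by_contra h
      push_neg at h
      exact absurd (csInf_le hSbdd h) (not_le.2 hx)
    have := (abs_le.1 (hε x)).1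
    linarith
  have hFg_le : F g ≤ q + ε := by
    have htend : Tendsto F (nhdsWithin g (Set.Iio g)) (nhds (F g)) :=
      (hF_cont.tendsto g).mono_left nhdsWithin_le_nhds
    exact le_of_tendsto htend (eventually_nhdsWithin_of_forall fun x hx => hx_lt x hx)
  have hFg_ge : q - ε ≤ F g := by
    have := (abs_le.1 (hε g)).2
    linarith
  rw [hghat q, ← hS, ← hg, abs_le]
  constructor <;> linarith
end

section
/- (Lemma C.2 / concentration_tilde: variance of the deconvolution-kernel CDF is small, known noise) For each i ∈ [m] and each fixed z ∈ [D₁, D₂], conditioned on θ_row(i) and on |B_i|, the kernel smoothed ECDF F̃^{(i)} satisfies P( |F̃^{(i)}(z) − E[F̃^{(i)}(z)]| ≥ t ) ≤ 2 exp( − |B_i|^{1/2} t² / (2 C₄² (log |B_i|)^{2/β}) ), where C₄ = B·K_max·(D₂ − D₁) / (π (4γ)^{1/β}). -/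
open MeasureTheory ProbabilityTheory
open scoped ENNReal
open Real Finset


lemma key_ineq {p : ℝ} (hp0 : 0 ≤ p) (hp1 : p ≤ 1) (h : ℝ) :
    (1 - p) * Real.exp (-p * h) + p * Real.exp ((1 - p) * h) ≤ Real.exp (h ^ 2 / 8) := by
  set N : ℝ → ℝ := fun x => 1 - p + p * Real.exp x with hNdef
  have hN : ∀ x, 0 < N x := by
    intro x
    have h1 : 0 ≤ 1 - p := by linarith
    have h2 : 0 ≤ p * Real.exp x := mul_nonneg hp0 (Real.exp_pos x).le
    rcases eq_or_lt_of_le hp1 with h' | h'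
    · have : N x = Real.exp x := by simp [hNdef, ← h']
      rw [this]; exact Real.exp_pos x
    · have : 0 < 1 - p := by linarith
      simp only [hNdef]; linarith
  set φ : ℝ → ℝ := fun x => x ^ 2 / 8 + p * x - Real.log (N x) with hφdef
  set φ' : ℝ → ℝ := fun x => x / 4 + p - p * Real.exp x / N x with hφ'def
  have dN : ∀ x, HasDerivAt N (p * Real.exp x) x := by
    intro x
    exact ((Real.hasDerivAt_exp x).const_mul p).const_add (1 - p)
  have dφ : ∀ x, HasDerivAt φ (φ' x) x := by
    intro x
    have hlog : HasDerivAt (fun x => Real.log (N x)) (p * Real.exp x / N x) x :=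
      (dN x).log (hN x).ne'
    have hpoly : HasDerivAt (fun x : ℝ => x ^ 2 / 8 + p * x) (x / 4 + p) x := by
      have h1 : HasDerivAt (fun x : ℝ => x ^ 2 / 8) (x / 4) x := by
        have := (hasDerivAt_pow 2 x).div_const 8
        exact this.congr_deriv (by norm_num; ring)
      have h2 : HasDerivAt (fun x : ℝ => p * x) p x := by
        simpa using (hasDerivAt_id x).const_mul p
      exact h1.add h2
    exact hpoly.sub hlog
  have dφ' : ∀ x, HasDerivAt φ'
      (1 / 4 - (p * Real.exp x * N x - p * Real.exp x * (p * Real.exp x)) / (N x) ^ 2) x := by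
    intro x
    have hdiv : HasDerivAt (fun x => p * Real.exp x / N x)
        ((p * Real.exp x * N x - p * Real.exp x * (p * Real.exp x)) / (N x) ^ 2) x :=
      ((Real.hasDerivAt_exp x).const_mul p).div (dN x) (hN x).ne'
    have h1 : HasDerivAt (fun x : ℝ => x / 4 + p) (1 / 4) x := by
      simpa using ((hasDerivAt_id x).div_const 4).add_const p
    exact h1.sub hdiv
  have hφ''nonneg : ∀ x,
      0 ≤ 1 / 4 - (p * Real.exp x * N x - p * Real.exp x * (p * Real.exp x)) / (N x) ^ 2 := by
    intro x
    have hNx := hN x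
    rw [sub_nonneg, div_le_iff₀ (by positivity : (0:ℝ) < (N x) ^ 2)]
    have hsq : 0 ≤ ((1 - p) - p * Real.exp x) ^ 2 := sq_nonneg _
    have : N x = 1 - p + p * Real.exp x := rfl
    nlinarith [Real.exp_pos x, sq_nonneg ((1 - p) - p * Real.exp x)]
  have hφ'mono : Monotone φ' := by
    apply monotone_of_deriv_nonneg
    · exact fun x => (dφ' x).differentiableAt
    · intro x
      rw [(dφ' x).deriv]
      exact hφ''nonneg x
  have hN0 : N 0 = 1 := by simp [hNdef]
  have hφ'0 : φ' 0 = 0 := by simp [hφ'def, hN0]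
  have hφ0 : φ 0 = 0 := by simp [hφdef, hN0]
  have hφnonneg : ∀ x, 0 ≤ φ x := by
    intro x
    rcases le_total 0 x with hx | hx
    · have : MonotoneOn φ (Set.Ici 0) := by
        apply monotoneOn_of_deriv_nonneg (convex_Ici 0)
        · exact (Differentiable.continuous (fun y => (dφ y).differentiableAt)).continuousOn
        · intro y _
          exact ((dφ y).differentiableAt).differentiableWithinAt
        · intro y hy
          rw [(dφ y).deriv]
          rw [← hφ'0]
          exact hφ'mono (le_of_lt (by simpa using hy))
      have := this (Set.self_mem_Ici) (Set.mem_Ici.mpr hx) hx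
      rwa [hφ0] at this
    · have : AntitoneOn φ (Set.Iic 0) := by
        apply antitoneOn_of_deriv_nonpos (convex_Iic 0)
        · exact (Differentiable.continuous (fun y => (dφ y).differentiableAt)).continuousOn
        · intro y _
          exact ((dφ y).differentiableAt).differentiableWithinAt
        · intro y hy
          rw [(dφ y).deriv]
          rw [← hφ'0]
          exact hφ'mono (le_of_lt (by simpa using hy))
      have := this (Set.mem_Iic.mpr hx) Set.self_mem_Iic hx
      rwa [hφ0] at this

  -- now conclude
  have hLHS : (1 - p) * Real.exp (-p * h) + p * Real.exp ((1 - p) * h)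
      = Real.exp (-p * h) * N h := by
    have : Real.exp ((1 - p) * h) = Real.exp (-p * h) * Real.exp h := by
      rw [← Real.exp_add]; ring_nf
    rw [this, hNdef]; ring
  rw [hLHS]
  have hlog : Real.log (N h) ≤ h ^ 2 / 8 + p * h := by
    have := hφnonneg h
    simp only [hφdef] at this
    linarith
  have : N h ≤ Real.exp (h ^ 2 / 8 + p * h) := by
    rw [← Real.exp_log (hN h)]
    exact Real.exp_le_exp.mpr hlog
  calc Real.exp (-p * h) * N h ≤ Real.exp (-p * h) * Real.exp (h ^ 2 / 8 + p * h) := by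
        exact mul_le_mul_of_nonneg_left this (Real.exp_pos _).le
    _ = Real.exp (h ^ 2 / 8) := by rw [← Real.exp_add]; ring_nf




lemma hoeffding_mgf {Ω : Type} [MeasurableSpace Ω] (μ : Measure Ω) [IsProbabilityMeasure μ]
    {V : Ω → ℝ} {a b : ℝ} (hm : Measurable V) (hVab : ∀ ω, V ω ∈ Set.Icc a b)
    (h0 : ∫ ω, V ω ∂μ = 0) (s : ℝ) :
    mgf V μ s ≤ Real.exp (s ^ 2 * (b - a) ^ 2 / 8) := by
  have hne : Nonempty Ω := by
    by_contra hc
    rw [not_nonempty_iff] at hc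
    have h1 : μ Set.univ = 1 := measure_univ
    have h2 : (Set.univ : Set Ω) = ∅ := Set.univ_eq_empty_iff.mpr hc
    rw [h2, measure_empty] at h1
    exact zero_ne_one h1
  have hVint : Integrable V μ := by
    refine (integrable_const (max |a| |b|)).mono' hm.aestronglyMeasurable ?_
    refine Filter.Eventually.of_forall fun ω => ?_
    rcases hVab ω with ⟨h1, h2⟩
    rw [Real.norm_eq_abs, abs_le]
    exact ⟨le_trans (by calc -(max |a| |b|) ≤ -|a| := by simp
            _ ≤ a := neg_abs_le a) h1,
          h2.trans ((le_abs_self b).trans (le_max_right _ _))⟩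
  have hconsta : ∫ (_ : Ω), a ∂μ = a := by simp
  have hconstb : ∫ (_ : Ω), b ∂μ = b := by simp
  have ha0 : a ≤ 0 := by
    rw [← hconsta, ← h0]
    exact integral_mono (integrable_const a) hVint fun ω => (hVab ω).1
  have hb0 : 0 ≤ b := by
    rw [← hconstb, ← h0]
    exact integral_mono hVint (integrable_const b) fun ω => (hVab ω).2
  rcases eq_or_lt_of_le (ha0.trans hb0) with hab | hab
  · -- a = b case: then a = 0 = b and V ≡ 0
    have ha : a = 0 := by linarith
    have hb : b = 0 := by linarith
    have hV0 : ∀ ω, V ω = 0 := fun ω => le_antisymm (hb ▸ (hVab ω).2) (ha ▸ (hVab ω).1)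
    have : mgf V μ s = 1 := by
      unfold mgf
      simp only [hV0, mul_zero, Real.exp_zero]
      simp
    rw [this]
    exact Real.one_le_exp (by positivity)
  · -- a < b
    set p : ℝ := -a / (b - a) with hp
    have hba : (0:ℝ) < b - a := by linarith
    have hp0 : 0 ≤ p := div_nonneg (by linarith) hba.le
    have hp1 : p ≤ 1 := by
      rw [div_le_one hba]; linarith
    set h : ℝ := s * (b - a) with hh
    -- pointwise convexity bound
    have hpt : ∀ ω, Real.exp (s * V ω) ≤
        (b - V ω) / (b - a) * Real.exp (s * a) + (V ω - a) / (b - a) * Real.exp (s * b) := by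
      intro ω
      rcases hVab ω with ⟨h1, h2⟩
      have hc1 : 0 ≤ (b - V ω) / (b - a) := div_nonneg (by linarith) hba.le
      have hc2 : 0 ≤ (V ω - a) / (b - a) := div_nonneg (by linarith) hba.le
      have hcsum : (b - V ω) / (b - a) + (V ω - a) / (b - a) = 1 := by
        field_simp
        ring
      have := convexOn_exp.2 (Set.mem_univ (s * a)) (Set.mem_univ (s * b)) hc1 hc2 hcsum
      simp only [smul_eq_mul] at this
      have harg : (b - V ω) / (b - a) * (s * a) + (V ω - a) / (b - a) * (s * b) = s * V ω := by
        field_simp; ring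
      rwa [harg] at this
    -- integrate
    have hintexp : Integrable (fun ω => Real.exp (s * V ω)) μ := by
      refine (integrable_const (max (Real.exp (s * a)) (Real.exp (s * b)))).mono'
        ((hm.const_mul s).exp.aestronglyMeasurable) ?_
      refine Filter.Eventually.of_forall fun ω => ?_
      rw [Real.norm_eq_abs, abs_of_pos (Real.exp_pos _)]
      rcases le_total s 0 with hs | hs
      · exact le_trans (Real.exp_le_exp.mpr (mul_le_mul_of_nonpos_left (hVab ω).1 hs))
          (le_max_left _ _)
      · exact le_trans (Real.exp_le_exp.mpr (mul_le_mul_of_nonneg_left (hVab ω).2 hs))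
          (le_max_right _ _)
    have hintrhs : Integrable
        (fun ω => (b - V ω) / (b - a) * Real.exp (s * a) + (V ω - a) / (b - a) * Real.exp (s * b)) μ := by
      apply Integrable.add
      · exact ((((integrable_const b).sub hVint).div_const (b - a)).mul_const _)
      · exact (((hVint.sub (integrable_const a)).div_const (b - a)).mul_const _)
    have hmgf_le : mgf V μ s ≤ (1 - p) * Real.exp (s * a) + p * Real.exp (s * b) := by
      have step1 : mgf V μ s ≤ ∫ ω, ((b - V ω) / (b - a) * Real.exp (s * a)
          + (V ω - a) / (b - a) * Real.exp (s * b)) ∂μ := by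
        unfold mgf
        exact integral_mono hintexp hintrhs hpt
      have step2 : ∫ ω, ((b - V ω) / (b - a) * Real.exp (s * a)
          + (V ω - a) / (b - a) * Real.exp (s * b)) ∂μ
          = (1 - p) * Real.exp (s * a) + p * Real.exp (s * b) := by
        have hrw : ∀ ω, (b - V ω) / (b - a) * Real.exp (s * a)
            + (V ω - a) / (b - a) * Real.exp (s * b)
            = (b / (b - a) * Real.exp (s * a) - a / (b - a) * Real.exp (s * b))
              + ((Real.exp (s * b) - Real.exp (s * a)) / (b - a)) * V ω := by
          intro ω; ring
        simp only [hrw]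
        rw [integral_add (integrable_const _) (hVint.const_mul _), integral_const_mul, h0,
          mul_zero, add_zero, integral_const, probReal_univ, one_smul]
        have e1 : b / (b - a) = 1 - p := by rw [hp]; field_simp; ring
        have e2 : -(a / (b - a)) = p := by rw [hp]; field_simp
        rw [e1, ← e2]; ring
      linarith [step1, step2.symm.le]
    have hpa : p * (b - a) = -a := by rw [hp]; field_simp
    have hpb : (1 - p) * (b - a) = b := by
      have : (1 - p) * (b - a) = (b - a) - p * (b - a) := by ring
      rw [this, hpa]; ring
    have hsa : s * a = -p * h := by
      rw [hh]
      calc s * a = s * -(p * (b - a)) := by rw [hpa, neg_neg]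
        _ = -p * (s * (b - a)) := by ring
    have hsb : s * b = (1 - p) * h := by
      rw [hh]
      calc s * b = s * ((1 - p) * (b - a)) := by rw [hpb]
        _ = (1 - p) * (s * (b - a)) := by ring
    have := key_ineq hp0 hp1 h
    rw [hsa, hsb] at hmgf_le
    have hfin : h ^ 2 / 8 = s ^ 2 * (b - a) ^ 2 / 8 := by rw [hh]; ring
    rw [hfin] at this
    exact hmgf_le.trans this



lemma mgf_sum_of_indep {Ω : Type} [MeasurableSpace Ω] (μ : Measure Ω) [IsProbabilityMeasure μ]
    {K : ℕ} (W : Fin K → Ω → ℝ) (hmeas : ∀ k, Measurable (W k))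
    (hind : ∀ (s : Finset (Fin K)) (j), j ∉ s →
      IndepFun (W j) (fun ω => ∑ k ∈ s, W k ω) μ)
    (u : ℝ) (s : Finset (Fin K)) :
    mgf (fun ω => ∑ k ∈ s, W k ω) μ u = ∏ k ∈ s, mgf (W k) μ u := by
  classical
  induction s using Finset.induction_on with
  | empty => simp [mgf_const]
  | @insert j s hj ih =>
    have hadd : (fun ω => ∑ k ∈ insert j s, W k ω)
        = W j + (fun ω => ∑ k ∈ s, W k ω) := by
      funext ω; simp [Finset.sum_insert hj]
    rw [hadd, IndepFun.mgf_add (hind s j hj)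
      (((hmeas j).const_mul u).exp.aestronglyMeasurable)
      (((Finset.measurable_sum s fun k _ => hmeas k).const_mul u).exp.aestronglyMeasurable),
      ih, Finset.prod_insert hj]

lemma hoeffding_tail_one_sided {Ω : Type} [MeasurableSpace Ω] (μ : Measure Ω)
    [IsProbabilityMeasure μ] {K : ℕ} (hK : 0 < K) (W : Fin K → Ω → ℝ)
    (hmeas : ∀ k, Measurable (W k)) (M : ℝ) (hM : 0 < M)
    (hbound : ∀ k, ∃ a b, b - a ≤ 2 * M ∧ ∀ ω, W k ω ∈ Set.Icc a b)
    (hmean : ∀ k, ∫ ω, W k ω ∂μ = 0)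
    (hind : ∀ (s : Finset (Fin K)) (j), j ∉ s →
      IndepFun (W j) (fun ω => ∑ k ∈ s, W k ω) μ)
    (ε : ℝ) (hε : 0 < ε) :
    (μ {ω | ε ≤ ∑ k, W k ω}).toReal
      ≤ Real.exp (-ε ^ 2 / (2 * K * M ^ 2)) := by
  set u : ℝ := ε / (K * M ^ 2) with hu
  have hKpos : (0:ℝ) < K := by exact_mod_cast hK
  have hu0 : 0 ≤ u := le_of_lt (by positivity)
  -- mgf bound for each W k
  have hmgf_each : ∀ k, mgf (W k) μ u ≤ Real.exp (u ^ 2 * M ^ 2 / 2) := by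
    intro k
    obtain ⟨a, b, hba, hab⟩ := hbound k
    refine (hoeffding_mgf μ (hmeas k) hab (hmean k) u).trans ?_
    apply Real.exp_le_exp.mpr
    have h1 : (b - a) ^ 2 ≤ (2 * M) ^ 2 := by
      have hab' : a ≤ b := by
        obtain ⟨ω⟩ : Nonempty Ω := by
          by_contra hc
          rw [not_nonempty_iff] at hc
          have h1 : μ Set.univ = 1 := measure_univ
          rw [Set.univ_eq_empty_iff.mpr hc, measure_empty] at h1
          exact zero_ne_one h1
        exact le_trans (hab ω).1 (hab ω).2
      have := sq_nonneg (b - a)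
      nlinarith
    nlinarith [sq_nonneg u]
  -- integrability of exponentials
  have hintexp : ∀ (k : Fin K), Integrable (fun ω => Real.exp (u * W k ω)) μ := by
    intro k
    obtain ⟨a, b, hba, hab⟩ := hbound k
    refine (integrable_const (Real.exp (|u| * (|a| + |b|)))).mono'
      (((hmeas k).const_mul u).exp.aestronglyMeasurable) ?_
    refine Filter.Eventually.of_forall fun ω => ?_
    rw [Real.norm_eq_abs, abs_of_pos (Real.exp_pos _)]
    apply Real.exp_le_exp.mpr
    have h1 : |W k ω| ≤ |a| + |b| := by
      rcases hab ω with ⟨h1, h2⟩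
      rw [abs_le]; constructor
      · calc -(|a| + |b|) ≤ -|a| := by
              have : (0:ℝ) ≤ |b| := abs_nonneg b
              linarith
          _ ≤ a := neg_abs_le a
          _ ≤ W k ω := h1
      · exact h2.trans ((le_abs_self b).trans (by linarith [abs_nonneg a]))
    calc u * W k ω ≤ |u * W k ω| := le_abs_self _
      _ = |u| * |W k ω| := abs_mul _ _
      _ ≤ |u| * (|a| + |b|) := by
          apply mul_le_mul_of_nonneg_left h1 (abs_nonneg u)
  have hintsum : Integrable (fun ω => Real.exp (u * ∑ k, W k ω)) μ := by
    -- sum bounded, so integrable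
    classical
    have : ∀ (s : Finset (Fin K)), Integrable (fun ω => Real.exp (u * ∑ k ∈ s, W k ω)) μ := by
      intro s
      induction s using Finset.induction_on with
      | empty => simpa using integrable_const (1:ℝ)
      | @insert j s hj ih =>
        have heq : (fun ω => Real.exp (u * ∑ k ∈ insert j s, W k ω))
            = fun ω => Real.exp (u * W j ω) * Real.exp (u * ∑ k ∈ s, W k ω) := by
          funext ω
          rw [← Real.exp_add, Finset.sum_insert hj]; ring_nf
        rw [heq]
        exact ((hind s j hj).exp_mul u u).integrable_mul (hintexp j) ih
    exact this Finset.univ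
  -- Chernoff
  have hcher := measure_ge_le_exp_mul_mgf (μ := μ) (X := fun ω => ∑ k, W k ω) ε hu0 hintsum
  refine hcher.trans ?_
  rw [mgf_sum_of_indep μ W hmeas hind u Finset.univ]
  have hprod : ∏ k, mgf (W k) μ u ≤ Real.exp ((K : ℝ) * (u ^ 2 * M ^ 2 / 2)) := by
    calc ∏ k, mgf (W k) μ u ≤ ∏ (_ : Fin K), Real.exp (u ^ 2 * M ^ 2 / 2) := by
          apply Finset.prod_le_prod (fun k _ => mgf_nonneg) (fun k _ => hmgf_each k)
      _ = Real.exp ((K : ℝ) * (u ^ 2 * M ^ 2 / 2)) := by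
          rw [Finset.prod_const, ← Real.exp_nat_mul]
          simp
  calc Real.exp (-u * ε) * ∏ k, mgf (W k) μ u
      ≤ Real.exp (-u * ε) * Real.exp ((K : ℝ) * (u ^ 2 * M ^ 2 / 2)) :=
        mul_le_mul_of_nonneg_left hprod (Real.exp_pos _).le
    _ = Real.exp (-u * ε + (K : ℝ) * (u ^ 2 * M ^ 2 / 2)) := (Real.exp_add _ _).symm
    _ = Real.exp (-ε ^ 2 / (2 * K * M ^ 2)) := by
        congr 1
        rw [hu]
        field_simp
        ring



lemma Lfun_bound_cont
    (β γ B : ℝ) (hβ : 0 < β) (hγ : 0 < γ) (hB : 1 < B)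
    (φN φK : ℝ → ℝ)
    (hsmooth : ∀ t, B⁻¹ * Real.exp (-γ * |t| ^ β) ≤ φN t ∧ φN t ≤ B * Real.exp (-γ * |t| ^ β))
    (hφK_supp : ∀ t, t ∉ Set.Icc (-1:ℝ) 1 → φK t = 0)
    (Kmax : ℝ) (hKmax : IsGreatest ((fun t => |φK t|) '' Set.Icc (-1:ℝ) 1) Kmax)
    (bw : ℝ) (hbw0 : 0 < bw)
    (hG : AEStronglyMeasurable (fun t => φK t / φN (t/bw)) volume) :
    Continuous (fun z => ∫ t, Real.cos (t*z) * φK t / φN (t/bw)) ∧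
    ∀ z, |∫ t, Real.cos (t*z) * φK t / φN (t/bw)|
      ≤ 2 * (B * Kmax * Real.exp (γ * (1/bw) ^ β)) := by
  have hB0 : (0:ℝ) < B := lt_trans one_pos hB
  have hφNpos : ∀ x, 0 < φN x := fun x =>
    lt_of_lt_of_le (by positivity) (hsmooth x).1
  have hKmax0 : 0 ≤ Kmax := le_trans (abs_nonneg (φK 0))
    (hKmax.2 ⟨0, by norm_num, rfl⟩)
  set C : ℝ := B * Kmax * Real.exp (γ * (1/bw) ^ β) with hC
  have hC0 : 0 ≤ C := by positivity
  set bound : ℝ → ℝ := Set.indicator (Set.Icc (-1:ℝ) 1) (fun _ => C) with hbound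
  -- pointwise bound
  have hpt : ∀ z t, ‖Real.cos (t*z) * φK t / φN (t/bw)‖ ≤ bound t := by
    intro z t
    by_cases hmem : t ∈ Set.Icc (-1:ℝ) 1
    · rw [hbound, Set.indicator_of_mem hmem]
      have h1 : |φK t| ≤ Kmax := hKmax.2 ⟨t, hmem, rfl⟩
      have h2 : (φN (t/bw))⁻¹ ≤ B * Real.exp (γ * |t/bw| ^ β) := by
        have hlow := (hsmooth (t/bw)).1
        have hx : (0:ℝ) < B⁻¹ * Real.exp (-γ * |t/bw| ^ β) := by positivity
        have := inv_anti₀ hx hlow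
        calc (φN (t/bw))⁻¹ ≤ (B⁻¹ * Real.exp (-γ * |t/bw| ^ β))⁻¹ := this
          _ = B * Real.exp (γ * |t/bw| ^ β) := by
            rw [mul_inv, inv_inv, ← Real.exp_neg]; ring_nf
      have h3 : Real.exp (γ * |t/bw| ^ β) ≤ Real.exp (γ * (1/bw) ^ β) := by
        apply Real.exp_le_exp.mpr
        apply mul_le_mul_of_nonneg_left _ hγ.le
        apply Real.rpow_le_rpow (abs_nonneg _) _ hβ.le
        rw [abs_div, abs_of_pos hbw0]
        apply div_le_div_of_nonneg_right ?_ hbw0.le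
        rw [abs_le]; exact ⟨hmem.1, hmem.2⟩
      have hcos : |Real.cos (t*z)| ≤ 1 := Real.abs_cos_le_one _
      rw [Real.norm_eq_abs, abs_div, abs_of_pos (hφNpos _), abs_mul, div_eq_mul_inv]
      calc |Real.cos (t*z)| * |φK t| * (φN (t/bw))⁻¹
          ≤ 1 * Kmax * (B * Real.exp (γ * (1/bw) ^ β)) := by
            apply mul_le_mul (mul_le_mul hcos h1 (abs_nonneg _) one_pos.le)
              (h2.trans (by exact mul_le_mul_of_nonneg_left h3 hB0.le))
              (inv_nonneg.mpr (hφNpos _).le) (by positivity)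
        _ = C := by rw [hC]; ring
    · rw [hφK_supp t hmem, hbound, Set.indicator_of_notMem hmem]
      simp
  have hbound_int : Integrable bound volume := by
    rw [hbound, integrable_indicator_iff measurableSet_Icc]
    exact integrableOn_const (by rw [Real.volume_Icc]; exact ENNReal.ofReal_ne_top)
  have hbound_integral : ∫ t, bound t = 2 * C := by
    rw [hbound, integral_indicator_const _ measurableSet_Icc]
    rw [Real.volume_real_Icc]
    rw [smul_eq_mul]
    rw [max_eq_left (by norm_num)]
    norm_num
  have hmeas : ∀ z, AEStronglyMeasurable (fun t => Real.cos (t*z) * φK t / φN (t/bw)) volume := by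
    intro z
    have : (fun t => Real.cos (t*z) * φK t / φN (t/bw))
        = fun t => Real.cos (t*z) * (φK t / φN (t/bw)) := by
      funext t; rw [mul_div_assoc]
    rw [this]
    exact ((Real.continuous_cos.comp (continuous_id.mul continuous_const)).aestronglyMeasurable).mul hG
  constructor
  · apply continuous_of_dominated hmeas (fun z => Filter.Eventually.of_forall (hpt z)) hbound_int
    refine Filter.Eventually.of_forall fun t => ?_
    have : (fun z => Real.cos (t*z) * φK t / φN (t/bw))
        = fun z => (φK t / φN (t/bw)) * Real.cos (t*z) := by
      funext z; ring
    rw [this]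
    exact continuous_const.mul (Real.continuous_cos.comp (continuous_const.mul continuous_id))
  · intro z
    calc |∫ t, Real.cos (t*z) * φK t / φN (t/bw)|
        ≤ ∫ t, ‖Real.cos (t*z) * φK t / φN (t/bw)‖ := by
          rw [← Real.norm_eq_abs]
          exact norm_integral_le_integral_norm _
      _ ≤ ∫ t, bound t := by
          apply integral_mono_of_nonneg (Filter.Eventually.of_forall fun t => norm_nonneg _)
            hbound_int (Filter.Eventually.of_forall (hpt z))
      _ = 2 * C := hbound_integral



lemma Lfun_zero_of_not_meas (φN φK : ℝ → ℝ) (bw : ℝ)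
    (hG : ¬ AEStronglyMeasurable (fun t => φK t / φN (t/bw)) volume) :
    ∀ z, (∫ t, Real.cos (t*z) * φK t / φN (t/bw)) = 0 := by
  intro z
  apply integral_undef
  intro hint
  apply hG
  have hm := hint.aestronglyMeasurable
  by_cases hz : z = 0
  · subst hz
    simpa using hm
  · have hnull : ∀ᵐ t : ℝ, Real.cos (t*z) ≠ 0 := by
      have hsub : {t : ℝ | ¬ Real.cos (t*z) ≠ 0}
          ⊆ Set.range (fun k : ℤ => ((2*(k:ℝ)+1) * Real.pi / 2) / z) := by
        intro t ht
        simp only [Set.mem_setOf_eq, not_not] at ht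
        obtain ⟨k, hk⟩ := Real.cos_eq_zero_iff.mp ht
        exact ⟨k, by field_simp [hz] at hk ⊢; linarith [hk]⟩
      exact measure_mono_null hsub ((Set.countable_range _).measure_zero _)
    have haesm : AEStronglyMeasurable
        (fun t => (Real.cos (t*z))⁻¹ * (Real.cos (t*z) * φK t / φN (t/bw))) volume := by
      refine AEStronglyMeasurable.mul ?_ hm
      exact (Measurable.inv (Real.measurable_cos.comp
        (measurable_id.mul_const z))).aestronglyMeasurable
    refine haesm.congr ?_
    filter_upwards [hnull] with t hc
    field_simp



lemma indep_grouped {Ω : Type} [MeasurableSpace Ω] {μ : Measure Ω} {K : ℕ}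
    (X Nz : Fin K → Ω → ℝ)
    (hX_meas : ∀ k, Measurable (X k)) (hN_meas : ∀ k, Measurable (Nz k))
    (hindep : iIndepFun (Sum.elim X Nz) μ)
    (g : ℝ → ℝ) (hg : Measurable g) (c : Fin K → ℝ)
    (s : Finset (Fin K)) (j : Fin K) (hj : j ∉ s) :
    IndepFun (fun ω => g (X j ω + Nz j ω) - c j)
      (fun ω => ∑ k ∈ s, (g (X k ω + Nz k ω) - c k)) μ := by
  classical
  set S : Finset (Fin K ⊕ Fin K) := {Sum.inl j, Sum.inr j} with hS
  set T : Finset (Fin K ⊕ Fin K) := s.biUnion (fun k => {Sum.inl k, Sum.inr k}) with hT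
  have hd : Disjoint S T := by
    rw [Finset.disjoint_left]
    intro x hxS hxT
    rw [hT, Finset.mem_biUnion] at hxT
    obtain ⟨k, hks, hxk⟩ := hxT
    rw [hS] at hxS
    simp only [Finset.mem_insert, Finset.mem_singleton] at hxS hxk
    rcases hxS with h | h <;> rcases hxk with h' | h' <;> subst h <;>
      first
      | (exact hj ((Sum.inl.inj h') ▸ hks))
      | (exact hj ((Sum.inr.inj h') ▸ hks))
      | (exact nomatch h')
  have hmeas : ∀ i, Measurable (Sum.elim X Nz i) := by
    rintro (k | k)
    · exact hX_meas k
    · exact hN_meas k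
  have base := hindep.indepFun_finset S T hd hmeas
  have hinlS : Sum.inl j ∈ S := by simp [hS]
  have hinrS : Sum.inr j ∈ S := by simp [hS]
  have hinlT : ∀ k ∈ s, Sum.inl k ∈ T := by
    intro k hk; rw [hT, Finset.mem_biUnion]; exact ⟨k, hk, by simp⟩
  have hinrT : ∀ k ∈ s, Sum.inr k ∈ T := by
    intro k hk; rw [hT, Finset.mem_biUnion]; exact ⟨k, hk, by simp⟩
  set F : ((i : S) → ℝ) → ℝ :=
    fun v => g (v ⟨Sum.inl j, hinlS⟩ + v ⟨Sum.inr j, hinrS⟩) - c j with hF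
  set G : ((i : T) → ℝ) → ℝ :=
    fun v => ∑ k ∈ s.attach,
      (g (v ⟨Sum.inl k.1, hinlT k.1 k.2⟩ + v ⟨Sum.inr k.1, hinrT k.1 k.2⟩) - c k.1) with hGdef
  have hFm : Measurable F :=
    (hg.comp ((measurable_pi_apply (⟨Sum.inl j, hinlS⟩ : {x // x ∈ S})).add
      (measurable_pi_apply (⟨Sum.inr j, hinrS⟩ : {x // x ∈ S})))).sub measurable_const
  have hGm : Measurable G := by
    apply Finset.measurable_sum
    intro k _
    exact (hg.comp ((measurable_pi_apply (⟨Sum.inl k.1, hinlT k.1 k.2⟩ : {x // x ∈ T})).add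
      (measurable_pi_apply (⟨Sum.inr k.1, hinrT k.1 k.2⟩ : {x // x ∈ T})))).sub measurable_const
  have hcomp := base.comp hFm hGm
  have e1 : (F ∘ fun a (i : S) => Sum.elim X Nz (i : Fin K ⊕ Fin K) a)
      = fun ω => g (X j ω + Nz j ω) - c j := by
    funext ω; simp [hF]
  have e2 : (G ∘ fun a (i : T) => Sum.elim X Nz (i : Fin K ⊕ Fin K) a)
      = fun ω => ∑ k ∈ s, (g (X k ω + Nz k ω) - c k) := by
    funext ω
    simp only [Function.comp_apply, hGdef, Sum.elim_inl, Sum.elim_inr]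
    rw [← Finset.sum_attach s (fun k => g (X k ω + Nz k ω) - c k)]
  rw [e1, e2] at hcomp
  exact hcomp


/-- Lemma C.2 (pointwise concentration of the deconvolution-kernel CDF estimator,
known noise), stated conditionally on the row feature and the number `K = |B_i|`
of observed entries in the row. -/
theorem concentration_tilde
    {Ω : Type} [MeasurableSpace Ω] (μ : Measure Ω) [IsProbabilityMeasure μ]
    -- conditioned on θ_row(i) and |B_i| = K, the observed entries of row i are
    -- K i.i.d. samples Z k = X k + N k
    (K : ℕ) (β γ B : ℝ) (hβ : 0 < β) (hγ : 0 < γ) (hB : 1 < B)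
    (ν : Measure ℝ) (hν : IsProbabilityMeasure ν)
    (X Nz : Fin K → Ω → ℝ)
    (hX_meas : ∀ k, Measurable (X k)) (hN_meas : ∀ k, Measurable (Nz k))
    (hX_id : ∀ k k', Measure.map (X k) μ = Measure.map (X k') μ)
    (hN_law : ∀ k, Measure.map (Nz k) μ = ν)
    (hν_symm : Measure.map (fun x => -x) ν = ν)
    (hindep : iIndepFun (Sum.elim X Nz) μ)
    (Z : Fin K → Ω → ℝ) (hZ : ∀ k ω, Z k ω = X k ω + Nz k ω)
    -- the noise characteristic function is supersmooth of order β
    (φN : ℝ → ℝ) (hφN : ∀ t, φN t = ∫ x, Real.cos (t*x) ∂ν)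
    (hsmooth : ∀ t, B⁻¹ * Real.exp (-γ * |t| ^ β) ≤ φN t ∧ φN t ≤ B * Real.exp (-γ * |t| ^ β))
    -- kernel: symmetric, with Fourier transform φK supported in [-1,1], of max modulus Kmax
    (φK : ℝ → ℝ) (Kmax : ℝ)
    (hφK_symm : ∀ t, φK (-t) = φK t)
    (hφK_supp : ∀ t, t ∉ Set.Icc (-1:ℝ) 1 → φK t = 0)
    (hKmax : IsGreatest ((fun t => |φK t|) '' Set.Icc (-1:ℝ) 1) Kmax)
    -- truncation interval [D₁, D₂] containing the signal range
    (D₁ D₂ : ℝ) (hD : D₁ < D₂)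
    (hXrange : ∀ k ω, X k ω ∈ Set.Icc D₁ D₂)
    -- bandwidth, deconvolution kernel and kernel-smoothed ECDF
    (bw : ℝ) (hbw : bw = (4*γ) ^ ((1:ℝ)/β) * (Real.log (K:ℝ)) ^ (-(1:ℝ)/β))
    (Lfun : ℝ → ℝ)
    (hLfun : ∀ z, Lfun z = (1/(2*Real.pi)) * ∫ t, Real.cos (t*z) * φK t / φN (t/bw))
    (ftil : Ω → ℝ → ℝ)
    (hftil : ∀ ω z, ftil ω z = (1/(bw*(K:ℝ))) * ∑ k, Lfun ((z - Z k ω)/bw))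
    (Ftil : Ω → ℝ → ℝ)
    (hFtil : ∀ ω z, Ftil ω z = if z < D₂ then ∫ w in D₁..z, ftil ω w else 1)
    (C₄ : ℝ) (hC₄ : C₄ = B * Kmax * (D₂ - D₁) / (Real.pi * (4*γ) ^ ((1:ℝ)/β)))
    (z : ℝ) (hz : z ∈ Set.Icc D₁ D₂) (t : ℝ) (ht : 0 ≤ t) :
    μ {ω | t ≤ |Ftil ω z - ∫ ω', Ftil ω' z ∂μ|}
      ≤ ENNReal.ofReal (2 * Real.exp (-((K:ℝ) ^ ((1:ℝ)/2) * t^2)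
          / (2 * C₄^2 * (Real.log (K:ℝ)) ^ ((2:ℝ)/β)))) := by
    classical
  rcases eq_or_lt_of_le ht with ht0 | ht0
  · have h2 : (2:ℝ) * Real.exp (-((K:ℝ) ^ ((1:ℝ)/2) * t^2)
        / (2 * C₄^2 * (Real.log (K:ℝ)) ^ ((2:ℝ)/β))) = 2 := by
      rw [← ht0]; norm_num
    rw [h2]
    calc μ {ω | t ≤ |Ftil ω z - ∫ ω', Ftil ω' z ∂μ|} ≤ 1 := prob_le_one
      _ ≤ ENNReal.ofReal 2 := by
          rw [← ENNReal.ofReal_one]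
          exact ENNReal.ofReal_le_ofReal (by norm_num)
  have htriv : ∀ c : ℝ, (∀ ω, Ftil ω z = c) →
      μ {ω | t ≤ |Ftil ω z - ∫ ω', Ftil ω' z ∂μ|} = 0 := by
    intro c hc
    have hI : (∫ ω', Ftil ω' z ∂μ) = c := by simp [hc]
    have hempty : {ω | t ≤ |Ftil ω z - ∫ ω', Ftil ω' z ∂μ|} = ∅ := by
      ext ω
      simp only [Set.mem_setOf_eq, Set.mem_empty_iff_false, iff_false, not_le]
      rw [hI, hc, sub_self, abs_zero]
      exact ht0
    rw [hempty, measure_empty]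
  rcases lt_or_eq_of_le hz.2 with hzD | hzD
  swap
  · rw [htriv 1 (fun ω => by rw [hFtil, hzD]; simp)]
    exact zero_le
  by_cases hK2 : K < 2
  · have hbw0 : bw = 0 := by
      have hlog : Real.log (K:ℝ) = 0 := by
        interval_cases K
        · simp
        · simp
      rw [hbw, hlog, Real.zero_rpow (by
        rw [neg_div]
        exact neg_ne_zero.mpr (div_ne_zero one_ne_zero hβ.ne'))]
      ring
    have hf0 : ∀ ω w, ftil ω w = 0 := by
      intro ω w
      rw [hftil, hbw0]
      simp
    rw [htriv 0 (fun ω => by rw [hFtil, if_pos hzD]; simp [hf0])]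
    exact zero_le
  push_neg at hK2
  have hB0 : (0:ℝ) < B := lt_trans one_pos hB
  have hK1 : (1:ℝ) < (K:ℝ) := by exact_mod_cast lt_of_lt_of_le one_lt_two hK2
  have hK0pos : (0:ℝ) < (K:ℝ) := lt_trans one_pos hK1
  have hlogK : 0 < Real.log (K:ℝ) := Real.log_pos hK1
  have h4γ : (0:ℝ) < 4*γ := by linarith
  have hbwpos : 0 < bw := by
    rw [hbw]
    exact mul_pos (Real.rpow_pos_of_pos h4γ _) (Real.rpow_pos_of_pos hlogK _)
  by_cases hKm0 : Kmax ≤ 0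
  · have hphiK : ∀ u, φK u = 0 := by
      intro u
      by_cases hu : u ∈ Set.Icc (-1:ℝ) 1
      · have h1 : |φK u| ≤ Kmax := hKmax.2 ⟨u, hu, rfl⟩
        exact abs_eq_zero.mp (le_antisymm (h1.trans hKm0) (abs_nonneg _))
      · exact hφK_supp u hu
    have hL0 : ∀ u, Lfun u = 0 := by
      intro u
      rw [hLfun]
      have he : (fun s => Real.cos (s*u) * φK s / φN (s/bw)) = fun _ => (0:ℝ) :=
        funext fun s => by rw [hphiK]; simp
      rw [he, integral_zero, mul_zero]
    rw [htriv 0 (fun ω => by rw [hFtil, if_pos hzD]; simp [hftil, hL0])]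
    exact zero_le
  push_neg at hKm0
  by_cases hG : AEStronglyMeasurable (fun s => φK s / φN (s/bw)) volume
  swap
  · have hL0 : ∀ u, Lfun u = 0 := fun u => by
      rw [hLfun, Lfun_zero_of_not_meas φN φK bw hG u, mul_zero]
    rw [htriv 0 (fun ω => by rw [hFtil, if_pos hzD]; simp [hftil, hL0])]
    exact zero_le
  -- ===================== MAIN CASE =====================
  obtain ⟨hLcont0, hLbound0⟩ :=
    Lfun_bound_cont β γ B hβ hγ hB φN φK hsmooth hφK_supp Kmax hKmax bw hbwpos hG
  have hLfun_eq : Lfun = fun u => (1/(2*Real.pi)) * ∫ s, Real.cos (s*u) * φK s / φN (s/bw) :=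
    funext fun u => hLfun u
  have hLcont : Continuous Lfun := by rw [hLfun_eq]; exact continuous_const.mul hLcont0
  -- bandwidth arithmetic
  have hbwinv : 1/bw = ((4*γ) ^ ((1:ℝ)/β))⁻¹ * (Real.log (K:ℝ)) ^ ((1:ℝ)/β) := by
    have hneg : (Real.log (K:ℝ)) ^ (-(1:ℝ)/β) = ((Real.log (K:ℝ)) ^ ((1:ℝ)/β))⁻¹ := by
      rw [neg_div, Real.rpow_neg hlogK.le]
    rw [hbw, hneg, one_div, mul_inv, inv_inv]
  have hββ : (1:ℝ)/β*β = 1 := one_div_mul_cancel hβ.ne'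
  have hpow : (1/bw) ^ β = (4*γ)⁻¹ * Real.log (K:ℝ) := by
    rw [hbwinv, Real.mul_rpow (inv_nonneg.mpr (Real.rpow_nonneg h4γ.le _))
      (Real.rpow_nonneg hlogK.le _),
      Real.inv_rpow (Real.rpow_nonneg h4γ.le _),
      ← Real.rpow_mul h4γ.le, ← Real.rpow_mul hlogK.le, hββ, Real.rpow_one, Real.rpow_one]
  have hexp4 : Real.exp (γ * (1/bw) ^ β) = (K:ℝ) ^ ((1:ℝ)/4) := by
    rw [hpow]
    have harg : γ * ((4*γ)⁻¹ * Real.log (K:ℝ)) = Real.log (K:ℝ) * ((1:ℝ)/4) := by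
      field_simp
    rw [harg, Real.rpow_def_of_pos hK0pos]
  -- Lfun bound
  set Mlf : ℝ := B * Kmax * (K:ℝ) ^ ((1:ℝ)/4) / Real.pi with hMlf
  have hKq : (0:ℝ) < (K:ℝ) ^ ((1:ℝ)/4) := Real.rpow_pos_of_pos hK0pos _
  have hMlfpos : 0 < Mlf := by
    rw [hMlf]
    exact div_pos (mul_pos (mul_pos hB0 hKm0) hKq) Real.pi_pos
  have hLbound : ∀ u, |Lfun u| ≤ Mlf := by
    intro u
    rw [hLfun, abs_mul, abs_of_pos (by positivity : (0:ℝ) < 1/(2*Real.pi))]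
    calc (1/(2*Real.pi)) * |∫ s, Real.cos (s*u) * φK s / φN (s/bw)|
        ≤ (1/(2*Real.pi)) * (2 * (B * Kmax * Real.exp (γ * (1/bw) ^ β))) :=
          mul_le_mul_of_nonneg_left (hLbound0 u) (by positivity)
      _ = Mlf := by
          rw [hexp4, hMlf]
          have hπ : Real.pi ≠ 0 := Real.pi_ne_zero
          field_simp
  -- primitive and Ycal
  set P : ℝ → ℝ := fun x => ∫ u in (0:ℝ)..x, Lfun u with hPdef
  set Ycal : ℝ → ℝ := fun c => (1/bw) * ∫ w in D₁..z, Lfun ((w - c)/bw) with hYcal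
  have hIval : ∀ c, (∫ w in D₁..z, Lfun ((w - c)/bw))
      = bw * (P ((z - c)/bw) - P ((D₁ - c)/bw)) := by
    intro c
    have h1 : (∫ w in D₁..z, Lfun ((w - c)/bw)) = ∫ x in (D₁ - c)..(z - c), Lfun (x/bw) :=
      intervalIntegral.integral_comp_sub_right (fun x => Lfun (x/bw)) c
    have h2 : (∫ x in (D₁ - c)..(z - c), Lfun (x/bw))
        = bw • ∫ u in (D₁ - c)/bw..(z - c)/bw, Lfun u :=
      intervalIntegral.integral_comp_div (f := Lfun) hbwpos.ne'
    have h3 : (∫ u in (D₁ - c)/bw..(z - c)/bw, Lfun u)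
        = P ((z - c)/bw) - P ((D₁ - c)/bw) :=
      (intervalIntegral.integral_interval_sub_left (hLcont.intervalIntegrable _ _)
        (hLcont.intervalIntegrable _ _)).symm
    rw [h1, h2, h3, smul_eq_mul]
  have hYeq : Ycal = fun c => P ((z - c)/bw) - P ((D₁ - c)/bw) := by
    funext c
    rw [hYcal]
    simp only
    rw [hIval c]
    field_simp
  have hPcont : Continuous P :=
    intervalIntegral.continuous_primitive (fun a b => hLcont.intervalIntegrable a b) 0
  have hYcont : Continuous Ycal := by
    rw [hYeq]
    exact (hPcont.comp ((continuous_const.sub continuous_id).div_const bw)).sub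
      (hPcont.comp ((continuous_const.sub continuous_id).div_const bw))
  set M : ℝ := C₄ * (Real.log (K:ℝ)) ^ ((1:ℝ)/β) * (K:ℝ) ^ ((1:ℝ)/4) with hM
  have hC₄pos : 0 < C₄ := by
    rw [hC₄]
    exact div_pos (mul_pos (mul_pos hB0 hKm0) (sub_pos.mpr hD))
      (mul_pos Real.pi_pos (Real.rpow_pos_of_pos h4γ _))
  have hMpos : 0 < M :=
    mul_pos (mul_pos hC₄pos (Real.rpow_pos_of_pos hlogK _)) hKq
  have hMeq : (1/bw) * (Mlf * (D₂ - D₁)) = M := by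
    rw [hbwinv, hMlf, hM, hC₄]
    have hπ : Real.pi ≠ 0 := Real.pi_ne_zero
    have h4 : ((4*γ) ^ ((1:ℝ)/β)) ≠ 0 := (Real.rpow_pos_of_pos h4γ _).ne'
    field_simp
  have hYbound : ∀ c, |Ycal c| ≤ M := by
    intro c
    rw [hYcal]
    simp only
    rw [abs_mul, abs_of_pos (by positivity : (0:ℝ) < 1/bw)]
    have hnorm : ‖∫ w in D₁..z, Lfun ((w - c)/bw)‖ ≤ Mlf * |z - D₁| :=
      intervalIntegral.norm_integral_le_of_norm_le_const (fun x _ => by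
        rw [Real.norm_eq_abs]; exact hLbound _)
    rw [Real.norm_eq_abs] at hnorm
    calc (1/bw) * |∫ w in D₁..z, Lfun ((w - c)/bw)| ≤ (1/bw) * (Mlf * |z - D₁|) :=
          mul_le_mul_of_nonneg_left hnorm (by positivity)
      _ ≤ (1/bw) * (Mlf * (D₂ - D₁)) := by
          apply mul_le_mul_of_nonneg_left _ (by positivity)
          apply mul_le_mul_of_nonneg_left _ hMlfpos.le
          rw [abs_of_nonneg (by linarith [hz.1] : (0:ℝ) ≤ z - D₁)]
          linarith
      _ = M := hMeq
  -- decomposition of Ftil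
  have hZmeas : ∀ k, Measurable (Z k) := fun k => by
    have he : Z k = fun ω => X k ω + Nz k ω := funext (hZ k)
    rw [he]; exact (hX_meas k).add (hN_meas k)
  have hFdecomp : ∀ ω, Ftil ω z = (1/(K:ℝ)) * ∑ k, Ycal (Z k ω) := by
    intro ω
    rw [hFtil, if_pos hzD]
    simp only [hftil]
    have hcont : ∀ c : ℝ, Continuous fun w : ℝ => Lfun ((w - c)/bw) :=
      fun c => hLcont.comp ((continuous_sub_right c).div_const bw)
    rw [intervalIntegral.integral_const_mul,
      intervalIntegral.integral_finset_sum (f := fun k w => Lfun ((w - Z k ω)/bw))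
        (fun k _ => (hcont (Z k ω)).intervalIntegrable _ _)]
    rw [Finset.mul_sum, Finset.mul_sum]
    apply Finset.sum_congr rfl
    intro k _
    rw [hYcal]
    simp only
    ring
  set m : Fin K → ℝ := fun k => ∫ ω, Ycal (Z k ω) ∂μ with hm
  have hYZmeas : ∀ k, Measurable fun ω => Ycal (Z k ω) := fun k =>
    hYcont.measurable.comp (hZmeas k)
  have hYZint : ∀ k, Integrable (fun ω => Ycal (Z k ω)) μ := fun k =>
    (integrable_const M).mono' (hYZmeas k).aestronglyMeasurable
      (Filter.Eventually.of_forall fun ω => by rw [Real.norm_eq_abs]; exact hYbound _)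
  set W : Fin K → Ω → ℝ := fun k ω => Ycal (Z k ω) - m k with hW
  have hWmeas : ∀ k, Measurable (W k) := fun k => (hYZmeas k).sub measurable_const
  have hWmean : ∀ k, ∫ ω, W k ω ∂μ = 0 := fun k => by
    rw [hW]
    simp only
    rw [integral_sub (hYZint k) (integrable_const _), integral_const]
    simp [hm]
  have hWbound : ∀ k, ∃ a b, b - a ≤ 2*M ∧ ∀ ω, W k ω ∈ Set.Icc a b := by
    intro k
    refine ⟨-M - m k, M - m k, le_of_eq (by ring), fun ω => ?_⟩
    have h1 := abs_le.mp (hYbound (Z k ω))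
    constructor
    · simp only [hW]; linarith [h1.1]
    · simp only [hW]; linarith [h1.2]
  have hFint : (∫ ω', Ftil ω' z ∂μ) = (1/(K:ℝ)) * ∑ k, m k := by
    have he : (fun ω' => Ftil ω' z) = fun ω' => (1/(K:ℝ)) * ∑ k, Ycal (Z k ω') :=
      funext hFdecomp
    rw [he, integral_const_mul, integral_finset_sum _ (fun k _ => hYZint k)]
  have hdiff : ∀ ω, Ftil ω z - ∫ ω', Ftil ω' z ∂μ = (1/(K:ℝ)) * ∑ k, W k ω := by
    intro ω
    rw [hFdecomp ω, hFint]
    simp only [hW]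
    rw [Finset.sum_sub_distrib]
    ring
  -- independence
  have hindW : ∀ (s : Finset (Fin K)) (j), j ∉ s →
      IndepFun (W j) (fun ω => ∑ k ∈ s, W k ω) μ := by
    intro s j hj
    have h := indep_grouped X Nz hX_meas hN_meas hindep Ycal hYcont.measurable m s j hj
    have e1 : (fun ω => Ycal (X j ω + Nz j ω) - m j) = W j :=
      funext fun ω => by simp only [hW]; rw [hZ]
    have e2 : (fun ω => ∑ k ∈ s, (Ycal (X k ω + Nz k ω) - m k)) = fun ω => ∑ k ∈ s, W k ω :=
      funext fun ω => Finset.sum_congr rfl fun k _ => by simp only [hW]; rw [hZ]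
    rwa [e1, e2] at h
  set W' : Fin K → Ω → ℝ := fun k ω => -(W k ω) with hW'
  have hW'meas : ∀ k, Measurable (W' k) := fun k => (hWmeas k).neg
  have hW'mean : ∀ k, ∫ ω, W' k ω ∂μ = 0 := fun k => by
    simp only [hW']
    rw [integral_neg, hWmean k, neg_zero]
  have hW'bound : ∀ k, ∃ a b, b - a ≤ 2*M ∧ ∀ ω, W' k ω ∈ Set.Icc a b := by
    intro k
    refine ⟨m k - M, m k + M, le_of_eq (by ring), fun ω => ?_⟩
    have h1 := abs_le.mp (hYbound (Z k ω))
    constructor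
    · simp only [hW', hW]; linarith [h1.2]
    · simp only [hW', hW]; linarith [h1.1]
  have hindW' : ∀ (s : Finset (Fin K)) (j), j ∉ s →
      IndepFun (W' j) (fun ω => ∑ k ∈ s, W' k ω) μ := by
    intro s j hj
    have h := (hindW s j hj).comp measurable_neg measurable_neg
    have e1 : ((fun x : ℝ => -x) ∘ W j) = W' j := funext fun ω => rfl
    have e2 : ((fun x : ℝ => -x) ∘ fun ω => ∑ k ∈ s, W k ω) = fun ω => ∑ k ∈ s, W' k ω := by
      funext ω
      simp [hW', Function.comp]
    rwa [e1, e2] at h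
  -- tail bounds
  have hKnat0 : 0 < K := by omega
  have hεpos : 0 < (K:ℝ) * t := mul_pos hK0pos ht0
  have htail1 := hoeffding_tail_one_sided μ hKnat0 W hWmeas M hMpos hWbound hWmean hindW
    ((K:ℝ)*t) hεpos
  have htail2 := hoeffding_tail_one_sided μ hKnat0 W' hW'meas M hMpos hW'bound hW'mean hindW'
    ((K:ℝ)*t) hεpos
  -- event inclusion
  have hsub : {ω | t ≤ |Ftil ω z - ∫ ω', Ftil ω' z ∂μ|}
      ⊆ {ω | (K:ℝ)*t ≤ ∑ k, W k ω} ∪ {ω | (K:ℝ)*t ≤ ∑ k, W' k ω} := by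
    intro ω hω
    simp only [Set.mem_setOf_eq] at hω
    rw [hdiff ω] at hω
    have habs : (K:ℝ)*t ≤ |∑ k, W k ω| := by
      rw [abs_mul, abs_of_pos (by positivity : (0:ℝ) < 1/(K:ℝ))] at hω
      calc (K:ℝ)*t ≤ (K:ℝ) * ((1/(K:ℝ)) * |∑ k, W k ω|) :=
            mul_le_mul_of_nonneg_left hω hK0pos.le
        _ = |∑ k, W k ω| := by field_simp
    rcases le_abs.mp habs with h | h
    · exact Or.inl h
    · refine Or.inr ?_
      simp only [Set.mem_setOf_eq, hW']
      rw [Finset.sum_neg_distrib]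
      exact h
  -- final exponent arithmetic
  set r : ℝ := (K:ℝ) ^ ((1:ℝ)/2) with hr
  set L : ℝ := (Real.log (K:ℝ)) ^ ((2:ℝ)/β) with hL
  have hr0 : 0 < r := Real.rpow_pos_of_pos hK0pos _
  have hL0 : 0 < L := Real.rpow_pos_of_pos hlogK _
  have hKr : (K:ℝ) = r^2 := by
    rw [hr, sq, ← Real.rpow_add hK0pos]
    norm_num
  have hA2 : ((Real.log (K:ℝ)) ^ ((1:ℝ)/β))^2 = L := by
    rw [hL, sq, ← Real.rpow_add hlogK]
    congr 1
    ring
  have hB2 : ((K:ℝ) ^ ((1:ℝ)/4))^2 = r := by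
    rw [hr, sq, ← Real.rpow_add hK0pos]
    norm_num
  have hMsq : M^2 = C₄^2 * L * r := by
    rw [hM]
    calc (C₄ * (Real.log (K:ℝ)) ^ ((1:ℝ)/β) * (K:ℝ) ^ ((1:ℝ)/4))^2
        = C₄^2 * ((Real.log (K:ℝ)) ^ ((1:ℝ)/β))^2 * ((K:ℝ) ^ ((1:ℝ)/4))^2 := by ring
      _ = C₄^2 * L * r := by rw [hA2, hB2]
  have hexp_eq : -((K:ℝ)*t)^2 / (2*(K:ℝ)*M^2)
      = -((K:ℝ) ^ ((1:ℝ)/2) * t^2) / (2 * C₄^2 * (Real.log (K:ℝ)) ^ ((2:ℝ)/β)) := by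
    rw [← hr, ← hL, hMsq, hKr]
    field_simp
  set R : ℝ := Real.exp (-((K:ℝ)*t)^2 / (2*(K:ℝ)*M^2)) with hR
  have hRpos : 0 ≤ R := (Real.exp_pos _).le
  have hb1 : μ {ω | (K:ℝ)*t ≤ ∑ k, W k ω} ≤ ENNReal.ofReal R := by
    rw [← ENNReal.ofReal_toReal (measure_ne_top μ _)]
    exact ENNReal.ofReal_le_ofReal htail1
  have hb2 : μ {ω | (K:ℝ)*t ≤ ∑ k, W' k ω} ≤ ENNReal.ofReal R := by
    rw [← ENNReal.ofReal_toReal (measure_ne_top μ _)]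
    exact ENNReal.ofReal_le_ofReal htail2
  calc μ {ω | t ≤ |Ftil ω z - ∫ ω', Ftil ω' z ∂μ|}
      ≤ μ ({ω | (K:ℝ)*t ≤ ∑ k, W k ω} ∪ {ω | (K:ℝ)*t ≤ ∑ k, W' k ω}) := measure_mono hsub
    _ ≤ μ {ω | (K:ℝ)*t ≤ ∑ k, W k ω} + μ {ω | (K:ℝ)*t ≤ ∑ k, W' k ω} := measure_union_le _ _
    _ ≤ ENNReal.ofReal R + ENNReal.ofReal R := add_le_add hb1 hb2
    _ = ENNReal.ofReal (2 * Real.exp (-((K:ℝ) ^ ((1:ℝ)/2) * t^2)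
          / (2 * C₄^2 * (Real.log (K:ℝ)) ^ ((2:ℝ)/β)))) := by
        rw [← ENNReal.ofReal_add hRpos hRpos]
        congr 1
        rw [hR, hexp_eq]
        ring
end

section
/- (Lemma D.1 / IandJ) Let J = {j ∈ [n] : |B^j| ≥ mp/2} and I = {i ∈ [m] : |B_i ∩ J| ≥ |J|p/2}. Then P( |J| ≤ n[1 − exp(−mp/8)]/2 ) ≤ exp( −n[1 − exp(−mp/8)]/8 ), and P( |I| ≤ m[1 − exp(−|J|p/8)]/2 ) ≤ exp( −m[1 − exp(−|J|p/8)]/8 ). -/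
open MeasureTheory ProbabilityTheory
open scoped ENNReal


open Finset

lemma chernoff {κ : Type*} [DecidableEq κ] [Fintype κ] {Z : κ → Type*} [∀ c, Fintype (Z c)]
    (w : ∀ c, Z c → ℝ) (hw0 : ∀ c z, 0 ≤ w c z) (hw1 : ∀ c, ∑ z, w c z = 1)
    (Y : ∀ c, Z c → Prop) [∀ c, DecidablePred (Y c)] (q : ℝ) (hq0 : 0 ≤ q)
    (hY : ∀ c, q ≤ ∑ z ∈ univ.filter (Y c), w c z) :
    ∑ x ∈ univ.filter (fun x : (∀ c, Z c) =>
        ((univ.filter (fun c => Y c (x c))).card : ℝ) ≤ (Fintype.card κ : ℝ) * q / 2),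
      ∏ c, w c (x c) ≤ Real.exp (-(Fintype.card κ : ℝ) * q / 8) := by
  classical
  set t : ℝ := Real.log 2 with ht
  have ht0 : 0 ≤ t := Real.log_nonneg one_le_two
  have hexpt : Real.exp (-t) = 1/2 := by
    rw [Real.exp_neg, Real.exp_log two_pos]; norm_num
  set k : ℝ := (Fintype.card κ : ℝ) with hk
  have hk0 : 0 ≤ k := Nat.cast_nonneg _
  set N : (∀ c, Z c) → ℝ := fun x => ((univ.filter (fun c => Y c (x c))).card : ℝ) with hN
  have hWpos : ∀ x : (∀ c, Z c), 0 ≤ ∏ c, w c (x c) :=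
    fun x => Finset.prod_nonneg fun c _ => hw0 c (x c)
  set g : ∀ c, Z c → ℝ := fun c z => w c z * Real.exp (-(t * (if Y c z then (1:ℝ) else 0)))
    with hg
  have hg0 : ∀ c z, 0 ≤ g c z := fun c z => mul_nonneg (hw0 c z) (Real.exp_pos _).le
  -- step 1 : bound by the exponential moment
  have step1 : ∑ x ∈ univ.filter (fun x : (∀ c, Z c) => N x ≤ k * q / 2), ∏ c, w c (x c)
      ≤ ∑ x : (∀ c, Z c), (∏ c, w c (x c)) * Real.exp (t * (k*q/2 - N x)) := by
    refine le_trans (Finset.sum_le_sum ?_) (Finset.sum_le_sum_of_subset_of_nonneg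
      (Finset.subset_univ _) ?_)
    · intro x hx
      rw [Finset.mem_filter] at hx
      have h1 : (1:ℝ) ≤ Real.exp (t * (k*q/2 - N x)) := by
        rw [← Real.exp_zero]
        apply Real.exp_le_exp.2
        have h2 : 0 ≤ k*q/2 - N x := by linarith [hx.2]
        exact mul_nonneg ht0 h2
      nlinarith [hWpos x, h1]
    · intro x _ _
      exact mul_nonneg (hWpos x) (Real.exp_pos _).le
  -- rewrite the exponential moment as a product
  have factor : ∀ x : (∀ c, Z c), (∏ c, w c (x c)) * Real.exp (t * (k*q/2 - N x))
      = Real.exp (t*(k*q/2)) * ∏ c, g c (x c) := by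
    intro x
    have hNx : N x = ∑ c, (if Y c (x c) then (1:ℝ) else 0) := by
      simp only [hN, Finset.card_filter, Nat.cast_sum, Nat.cast_ite, Nat.cast_one, Nat.cast_zero]
    have hs : ∑ c, (-(t * (if Y c (x c) then (1:ℝ) else 0))) = -(t * N x) := by
      rw [hNx, Finset.mul_sum, ← Finset.sum_neg_distrib]
    have e1 : t * (k*q/2 - N x) = t*(k*q/2) + ∑ c, (-(t * (if Y c (x c) then (1:ℝ) else 0))) := by
      rw [hs]; ring
    rw [e1, Real.exp_add, Real.exp_sum]
    simp only [hg, Finset.prod_mul_distrib]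
    ring
  have step2 : ∑ x : (∀ c, Z c), (∏ c, w c (x c)) * Real.exp (t * (k*q/2 - N x))
      = Real.exp (t*(k*q/2)) * ∏ c, ∑ z : Z c, g c z := by
    simp only [factor, ← Finset.mul_sum]
    congr 1
    exact (Fintype.prod_sum g).symm
  -- bound each factor
  have factor_bound : ∀ c, ∑ z : Z c, g c z ≤ Real.exp (-(q * (1 - Real.exp (-t)))) := by
    intro c
    set P := ∑ z ∈ univ.filter (Y c), w c z with hP
    have hP1 : P ≤ 1 := by
      rw [← hw1 c]
      exact Finset.sum_le_sum_of_subset_of_nonneg (filter_subset _ _) (fun z _ _ => hw0 c z)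
    have hPq : q ≤ P := hY c
    have hcompl : ∑ z ∈ univ.filter (fun z => ¬ Y c z), w c z = 1 - P := by
      have := Finset.sum_filter_add_sum_filter_not univ (Y c) (w c)
      rw [hw1 c] at this
      linarith
    have hsplit : ∑ z : Z c, g c z = P * Real.exp (-t) + (1 - P) := by
      rw [← Finset.sum_filter_add_sum_filter_not univ (Y c) (g c)]
      congr 1
      · rw [hP, Finset.sum_mul]
        apply Finset.sum_congr rfl
        intro z hz
        rw [Finset.mem_filter] at hz
        simp [hg, hz.2]
      · rw [← hcompl]
        apply Finset.sum_congr rfl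
        intro z hz
        rw [Finset.mem_filter] at hz
        simp [hg, hz.2]
    have hone : ∀ a : ℝ, 1 - a ≤ Real.exp (-a) := by
      intro a
      have := Real.add_one_le_exp (-a)
      linarith
    have hexppos : (0:ℝ) < 1 - Real.exp (-t) := by rw [hexpt]; norm_num
    calc ∑ z : Z c, g c z = 1 - P * (1 - Real.exp (-t)) := by rw [hsplit]; ring
      _ ≤ Real.exp (-(P * (1 - Real.exp (-t)))) := hone _
      _ ≤ Real.exp (-(q * (1 - Real.exp (-t)))) := by
          apply Real.exp_le_exp.2
          nlinarith
  have hsum0 : ∀ c, (0:ℝ) ≤ ∑ z : Z c, g c z :=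
    fun c => Finset.sum_nonneg fun z _ => hg0 c z
  have step3 : ∏ c, ∑ z : Z c, g c z ≤ Real.exp (-(k * (q * (1 - Real.exp (-t))))) := by
    calc ∏ c, ∑ z : Z c, g c z ≤ ∏ _c : κ, Real.exp (-(q * (1 - Real.exp (-t)))) :=
          Finset.prod_le_prod (fun c _ => hsum0 c) (fun c _ => factor_bound c)
      _ = Real.exp (-(k * (q * (1 - Real.exp (-t))))) := by
          rw [Finset.prod_const, ← Real.exp_nat_mul, Finset.card_univ, hk]
          congr 1
          ring
  have hlog : t < 0.6931471808 := Real.log_two_lt_d9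
  calc ∑ x ∈ univ.filter (fun x : (∀ c, Z c) => N x ≤ k * q / 2), ∏ c, w c (x c)
      ≤ Real.exp (t*(k*q/2)) * ∏ c, ∑ z : Z c, g c z := by rw [← step2]; exact step1
    _ ≤ Real.exp (t*(k*q/2)) * Real.exp (-(k * (q * (1 - Real.exp (-t))))) :=
        mul_le_mul_of_nonneg_left step3 (Real.exp_pos _).le
    _ = Real.exp (t*(k*q/2) - k * (q * (1 - Real.exp (-t)))) := by rw [← Real.exp_add]; ring_nf
    _ ≤ Real.exp (-k * q / 8) := by
        apply Real.exp_le_exp.2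
        rw [hexpt]
        nlinarith [mul_nonneg hk0 hq0]

open Finset in
lemma core_split {κ : Type*} [DecidableEq κ] [Fintype κ]
    (w : κ → Bool → ℝ) (φ : κ → Prop) [DecidablePred φ]
    (A : ({c // φ c} → Bool) → Prop) [DecidablePred A]
    (B : ({c // ¬ φ c} → Bool) → Prop) [DecidablePred B] :
    ∑ x ∈ univ.filter (fun x : κ → Bool => A (fun c => x c.1) ∧ B (fun c => x c.1)),
        ∏ c, w c (x c)
      = (∑ u ∈ univ.filter A, ∏ c : {c // φ c}, w c.1 (u c))
        * (∑ v ∈ univ.filter B, ∏ c : {c // ¬ φ c}, w c.1 (v c)) := by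
  classical
  have h1 : ∑ x ∈ univ.filter (fun x : κ → Bool => A (fun c => x c.1) ∧ B (fun c => x c.1)),
        ∏ c, w c (x c)
      = ∑ y ∈ (univ : Finset (({c // φ c} → Bool) × ({c // ¬φ c} → Bool))).filter
          (fun y => A y.1 ∧ B y.2),
          (∏ c : {c // φ c}, w c.1 (y.1 c)) * (∏ c : {c // ¬φ c}, w c.1 (y.2 c)) := by
    rw [Finset.sum_filter, Finset.sum_filter]
    apply Fintype.sum_equiv (Equiv.piEquivPiSubtypeProd φ (fun _ => Bool))
    intro x
    have hw : ∏ c, w c (x c)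
        = (∏ c : {c // φ c}, w c.1 (x c.1)) * (∏ c : {c // ¬φ c}, w c.1 (x c.1)) :=
      (Fintype.prod_subtype_mul_prod_subtype φ (fun c => w c (x c))).symm
    simp only [Equiv.piEquivPiSubtypeProd_apply, hw]
  rw [h1, Finset.univ_product_univ.symm, Finset.filter_product, Finset.sum_product]
  rw [Finset.sum_mul_sum]

open Finset in
lemma sum_one {κ : Type*} [DecidableEq κ] [Fintype κ]
    (w : κ → Bool → ℝ) (hw1 : ∀ c, w c true + w c false = 1) :
    ∑ x : κ → Bool, ∏ c, w c (x c) = 1 := by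
  rw [← Fintype.prod_sum (fun c (b : Bool) => w c b)]
  rw [Finset.prod_eq_one]
  intro c _
  rw [Fintype.sum_bool]
  linarith [hw1 c]

open Finset in
lemma factor_split {κ : Type*} [DecidableEq κ] [Fintype κ]
    (w : κ → Bool → ℝ) (hw1 : ∀ c, w c true + w c false = 1)
    (φ : κ → Prop) [DecidablePred φ]
    (A B : (κ → Bool) → Prop) [DecidablePred A] [DecidablePred B]
    (hA : ∀ x y : κ → Bool, (∀ c, φ c → x c = y c) → A x → A y)
    (hB : ∀ x y : κ → Bool, (∀ c, ¬ φ c → x c = y c) → B x → B y) :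
    ∑ x ∈ univ.filter (fun x : κ → Bool => A x ∧ B x), ∏ c, w c (x c)
      = (∑ x ∈ univ.filter A, ∏ c, w c (x c)) * (∑ x ∈ univ.filter B, ∏ c, w c (x c)) := by
  classical
  set A' : ({c // φ c} → Bool) → Prop :=
    fun u => A (fun c => if h : φ c then u ⟨c, h⟩ else false) with hA'
  set B' : ({c // ¬ φ c} → Bool) → Prop :=
    fun v => B (fun c => if h : ¬ φ c then v ⟨c, h⟩ else false) with hB'
  have hAiff : ∀ x : κ → Bool, A x ↔ A' (fun c => x c.1) := by
    intro x
    constructor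
    · intro h; exact hA x _ (fun c hc => by simp [hc]) h
    · intro h; exact hA _ x (fun c hc => by simp [hc]) h
  have hBiff : ∀ x : κ → Bool, B x ↔ B' (fun c => x c.1) := by
    intro x
    constructor
    · intro h; exact hB x _ (fun c hc => by simp [hc]) h
    · intro h; exact hB _ x (fun c hc => by simp [hc]) h
  have su : ∑ u : {c // φ c} → Bool, ∏ c : {c // φ c}, w c.1 (u c) = 1 :=
    sum_one _ (fun c => hw1 c.1)
  have sv : ∑ v : {c // ¬ φ c} → Bool, ∏ c : {c // ¬ φ c}, w c.1 (v c) = 1 :=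
    sum_one _ (fun c => hw1 c.1)
  have e1 : ∑ x ∈ univ.filter (fun x : κ → Bool => A x ∧ B x), ∏ c, w c (x c)
      = (∑ u ∈ univ.filter A', ∏ c : {c // φ c}, w c.1 (u c))
        * (∑ v ∈ univ.filter B', ∏ c : {c // ¬ φ c}, w c.1 (v c)) := by
    rw [← core_split w φ A' B']
    apply Finset.sum_congr _ (fun _ _ => rfl)
    apply Finset.filter_congr
    intro x _
    rw [hAiff x, hBiff x]
  have e2 : ∑ x ∈ univ.filter A, ∏ c, w c (x c)
      = (∑ u ∈ univ.filter A', ∏ c : {c // φ c}, w c.1 (u c)) := by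
    have := core_split w φ A' (fun _ => True)
    rw [Finset.filter_true, sv, mul_one] at this
    rw [← this]
    apply Finset.sum_congr _ (fun _ _ => rfl)
    apply Finset.filter_congr
    intro x _
    simp [hAiff x]
  have e3 : ∑ x ∈ univ.filter B, ∏ c, w c (x c)
      = (∑ v ∈ univ.filter B', ∏ c : {c // ¬ φ c}, w c.1 (v c)) := by
    have := core_split w φ (fun _ => True) B'
    rw [Finset.filter_true, su, one_mul] at this
    rw [← this]
    apply Finset.sum_congr _ (fun _ _ => rfl)
    apply Finset.filter_congr
    intro x _
    simp [hBiff x]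
  rw [e1, e2, e3]

open Finset in
lemma reduce_split {κ : Type*} [DecidableEq κ] [Fintype κ]
    (w : κ → Bool → ℝ) (hw1 : ∀ c, w c true + w c false = 1)
    (φ : κ → Prop) [DecidablePred φ]
    (A' : ({c // φ c} → Bool) → Prop) [DecidablePred A'] :
    ∑ x ∈ univ.filter (fun x : κ → Bool => A' (fun c => x c.1)), ∏ c, w c (x c)
      = ∑ u ∈ univ.filter A', ∏ c : {c // φ c}, w c.1 (u c) := by
  classical
  have sv : ∑ v : {c // ¬ φ c} → Bool, ∏ c : {c // ¬ φ c}, w c.1 (v c) = 1 :=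
    sum_one _ (fun c => hw1 c.1)
  have := core_split w φ A' (fun _ => True)
  rw [Finset.filter_true, sv, mul_one] at this
  rw [← this]
  apply Finset.sum_congr _ (fun _ _ => rfl)
  apply Finset.filter_congr
  intro x _
  simp

open Finset in
lemma harris {κ : Type*} [DecidableEq κ] [Fintype κ]
    (w : κ → Bool → ℝ) (hw0 : ∀ c b, 0 ≤ w c b) (hw1 : ∀ c, w c true + w c false = 1)
    (U L : (κ → Bool) → Prop) [DecidablePred U] [DecidablePred L]
    (hU : ∀ x y : κ → Bool, x ≤ y → U x → U y)
    (hL : ∀ x y : κ → Bool, x ≤ y → L y → L x) :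
    ∑ x ∈ univ.filter (fun x : κ → Bool => U x ∧ L x), ∏ c, w c (x c)
      ≤ (∑ x ∈ univ.filter U, ∏ c, w c (x c)) * (∑ x ∈ univ.filter L, ∏ c, w c (x c)) := by
  classical
  set W : (κ → Bool) → ℝ := fun x => ∏ c, w c (x c) with hW
  have hW0 : ∀ x, 0 ≤ W x := fun x => Finset.prod_nonneg fun c _ => hw0 c (x c)
  set f : (κ → Bool) → ℝ := fun x => if U x then 1 else 0 with hf
  set g : (κ → Bool) → ℝ := fun x => if L x then 0 else 1 with hg
  have hμ : ∀ a b : κ → Bool, W a * W b ≤ W (a ⊓ b) * W (a ⊔ b) := by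
    intro a b
    rw [hW]
    simp only [← Finset.prod_mul_distrib]
    apply le_of_eq
    apply Finset.prod_congr rfl
    intro c _
    have : (a ⊓ b) c = a c ⊓ b c := rfl
    have : (a ⊔ b) c = a c ⊔ b c := rfl
    cases hac : a c <;> cases hbc : b c <;>
      simp [Pi.inf_apply, Pi.sup_apply, hac, hbc, mul_comm]
  have hfmono : Monotone f := by
    intro a b hab
    by_cases h : U a
    · simp [hf, h, hU a b hab h]
    · simp only [hf, h, if_false]
      split <;> norm_num
  have hgmono : Monotone g := by
    intro a b hab
    by_cases h : L b
    · simp [hg, h, hL a b hab h]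
    · simp only [hg, h, if_false]
      split <;> norm_num
  have key := fkg (μ := W) (f := f) (g := g) (fun x => hW0 x)
    (fun x => by simp only [hf]; split <;> norm_num)
    (fun x => by simp only [hg]; split <;> norm_num) hfmono hgmono hμ
  have htot : ∑ x : κ → Bool, W x = 1 := sum_one w hw1
  have hPU : ∑ x : κ → Bool, W x * f x = ∑ x ∈ univ.filter U, W x := by
    rw [Finset.sum_filter]
    apply Finset.sum_congr rfl
    intro x _
    by_cases h : U x <;> simp [hf, h]
  have hGL : ∑ x : κ → Bool, W x * g x = ∑ x ∈ univ.filter (fun x => ¬ L x), W x := by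
    rw [Finset.sum_filter]
    apply Finset.sum_congr rfl
    intro x _
    by_cases h : L x <;> simp [hg, h]
  have hFG : ∑ x : κ → Bool, W x * (f x * g x)
      = ∑ x ∈ univ.filter (fun x => U x ∧ ¬ L x), W x := by
    rw [Finset.sum_filter]
    apply Finset.sum_congr rfl
    intro x _
    by_cases h1 : U x <;> by_cases h2 : L x <;> simp [hf, hg, h1, h2]
  have hsplit1 := Finset.sum_filter_add_sum_filter_not univ L W
  rw [htot] at hsplit1
  have hsplit2 := Finset.sum_filter_add_sum_filter_not (univ.filter U) L W
  rw [Finset.filter_filter, Finset.filter_filter] at hsplit2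
  have heta : univ.filter (fun x => L x) = univ.filter L := rfl
  rw [heta] at hsplit1
  rw [hPU, hGL, hFG, htot, one_mul] at key
  show ∑ x ∈ univ.filter (fun x => U x ∧ L x), W x
      ≤ (∑ x ∈ univ.filter U, W x) * ∑ x ∈ univ.filter L, W x
  have hb : (∑ x ∈ filter (fun x => ¬ L x) univ, W x) = 1 - ∑ x ∈ filter L univ, W x := by
    linarith
  rw [hb] at key
  nlinarith [key, hsplit2]

open Finset in
lemma sum_filter_equiv {X X' : Type*} [Fintype X] [Fintype X'] (e : X ≃ X')
    (pr : X → Prop) [DecidablePred pr] (p : X' → Prop) [DecidablePred p]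
    (f : X → ℝ) (g : X' → ℝ)
    (hp : ∀ x, pr x ↔ p (e x)) (hf : ∀ x, f x = g (e x)) :
    ∑ x ∈ univ.filter pr, f x = ∑ y ∈ univ.filter p, g y := by
  rw [Finset.sum_filter, Finset.sum_filter]
  exact Fintype.sum_equiv e _ _ (fun x => if_congr (hp x) (hf x) rfl)

open Finset in
lemma cnt_chernoff {ι : Type*} [DecidableEq ι] [Fintype ι] (p : ℝ) (hp0 : 0 ≤ p) (hp1 : p ≤ 1) :
    ∑ z ∈ univ.filter (fun z : ι → Bool =>
        (((univ.filter (fun i => z i = true)).card : ℝ) ≤ (Fintype.card ι : ℝ) * p / 2)),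
      ∏ i, (if z i then p else 1 - p)
      ≤ Real.exp (-(Fintype.card ι : ℝ) * p / 8) := by
  apply chernoff (w := fun _ b => if b then p else 1 - p) (Y := fun _ b => b = true) (q := p)
  · intro c z
    cases z <;> simp <;> linarith
  · intro c
    simp
  · exact hp0
  · intro c
    rw [show (univ.filter (fun b : Bool => b = true)) = {true} from by decide]
    simp

open Finset in
lemma cnt_chernoff' {ι : Type*} [DecidableEq ι] [Fintype ι] (p : ℝ) (hp0 : 0 ≤ p) (hp1 : p ≤ 1) :
    ∑ z ∈ univ.filter (fun z : ι → Bool =>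
        ¬ ((Fintype.card ι : ℝ) * p / 2 ≤ ((univ.filter (fun i => z i = true)).card : ℝ))),
      ∏ i, (if z i then p else 1 - p)
      ≤ Real.exp (-(Fintype.card ι : ℝ) * p / 8) := by
  refine le_trans (Finset.sum_le_sum_of_subset_of_nonneg
    (Finset.monotone_filter_right _ ?_) ?_) (cnt_chernoff p hp0 hp1)
  · intro z _ hz
    push_neg at hz
    exact hz.le
  · intro z _ _
    refine Finset.prod_nonneg fun i _ => ?_
    split <;> linarith

open Finset in
lemma good_lb {X : Type*} [Fintype X] (w : X → ℝ) (htot : ∑ x, w x = 1)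
    (Pr : X → Prop) [DecidablePred Pr] (ε : ℝ)
    (hbad : ∑ x ∈ univ.filter (fun x => ¬ Pr x), w x ≤ ε) :
    1 - ε ≤ ∑ x ∈ univ.filter Pr, w x := by
  have h := Finset.sum_filter_add_sum_filter_not univ Pr w
  rw [htot] at h
  have heta : univ.filter (fun x => Pr x) = univ.filter Pr := rfl
  rw [heta] at h
  linarith

/-- the equivalence sending a matrix pattern to its tuple of columns -/
def eCol (m n : ℕ) : (Fin m × Fin n → Bool) ≃ (Fin n → Fin m → Bool) where
  toFun x := fun j i => x (i, j)
  invFun y := fun q => y q.2 q.1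
  left_inv x := rfl
  right_inv y := rfl

open Finset in
lemma weight_col (m n : ℕ) (r : Bool → ℝ) (x : Fin m × Fin n → Bool) :
    ∏ q, r (x q) = ∏ j, ∏ i, r (eCol m n x j i) := by
  rw [Fintype.prod_prod_type, Finset.prod_comm]
  rfl

open Finset in
lemma partA (m n : ℕ) (p : ℝ) (hp0 : 0 < p) (hp1 : p ≤ 1) :
    ∑ x ∈ univ.filter (fun x : Fin m × Fin n → Bool =>
        (((univ.filter (fun j : Fin n =>
            (m:ℝ)*p/2 ≤ ((univ.filter (fun i : Fin m => x (i,j) = true)).card : ℝ))).card : ℝ)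
          ≤ (n:ℝ) * (1 - Real.exp (-(m:ℝ)*p/8)) / 2)),
      ∏ q, (if x q then p else 1 - p)
      ≤ Real.exp (-(n:ℝ) * (1 - Real.exp (-(m:ℝ)*p/8)) / 8) := by
  classical
  set r : Bool → ℝ := fun b => if b then p else 1 - p with hr
  have hr0 : ∀ b, 0 ≤ r b := by intro b; cases b <;> simp [hr] <;> linarith
  have hr1 : r true + r false = 1 := by simp [hr]
  set q : ℝ := 1 - Real.exp (-(m:ℝ)*p/8) with hq
  have hq0 : 0 ≤ q := by
    have : Real.exp (-(m:ℝ)*p/8) ≤ 1 := by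
      rw [Real.exp_le_one_iff]
      have : (0:ℝ) ≤ (m:ℝ)*p/8 := by positivity
      linarith
    rw [hq]; linarith
  have htrans : ∑ x ∈ univ.filter (fun x : Fin m × Fin n → Bool =>
        (((univ.filter (fun j : Fin n =>
            (m:ℝ)*p/2 ≤ ((univ.filter (fun i : Fin m => x (i,j) = true)).card : ℝ))).card : ℝ)
          ≤ (n:ℝ) * q / 2)),
      ∏ qq, r (x qq)
      = ∑ y ∈ univ.filter (fun y : Fin n → Fin m → Bool =>
        (((univ.filter (fun j : Fin n =>
            (m:ℝ)*p/2 ≤ ((univ.filter (fun i : Fin m => y j i = true)).card : ℝ))).card : ℝ)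
          ≤ (n:ℝ) * q / 2)),
      ∏ j, ∏ i, r (y j i) := by
    apply sum_filter_equiv (eCol m n)
    · intro x; exact Iff.rfl
    · intro x; exact weight_col m n r x
  rw [htrans]
  have hcher := chernoff (κ := Fin n) (Z := fun _ => Fin m → Bool)
    (w := fun _ z => ∏ i, r (z i))
    (fun _ z => Finset.prod_nonneg fun i _ => hr0 (z i))
    (fun _ => sum_one (fun _ => r) (fun _ => hr1))
    (Y := fun _ z => (m:ℝ)*p/2 ≤ ((univ.filter (fun i : Fin m => z i = true)).card : ℝ))
    q hq0 ?_
  · simpa [Fintype.card_fin] using hcher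
  · intro j
    have hbad : ∑ z ∈ univ.filter (fun z : Fin m → Bool =>
          ¬ ((m:ℝ)*p/2 ≤ ((univ.filter (fun i : Fin m => z i = true)).card : ℝ))),
        ∏ i, r (z i) ≤ Real.exp (-(m:ℝ)*p/8) := by
      have hsub : univ.filter (fun z : Fin m → Bool =>
          ¬ ((m:ℝ)*p/2 ≤ ((univ.filter (fun i : Fin m => z i = true)).card : ℝ)))
          ⊆ univ.filter (fun z : Fin m → Bool =>
          (((univ.filter (fun i : Fin m => z i = true)).card : ℝ) ≤ (m:ℝ)*p/2)) := by
        apply Finset.monotone_filter_right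
        intro z _ hz
        push_neg at hz
        exact hz.le
      refine le_trans (Finset.sum_le_sum_of_subset_of_nonneg hsub
        (fun z _ _ => Finset.prod_nonneg fun i _ => hr0 (z i))) ?_
      simpa [Fintype.card_fin] using cnt_chernoff (ι := Fin m) p hp0.le hp1
    have := good_lb (fun z : Fin m → Bool => ∏ i, r (z i))
      (sum_one (fun _ => r) (fun _ => hr1)) _ _ hbad
    rw [hq]
    exact this

open Finset in
lemma card_subtype_inter {n : ℕ} (J₀ : Finset (Fin n)) (z : Fin n → Bool) :
    (((univ.filter (fun j => z j = true)) ∩ J₀).card : ℝ)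
      = (((@univ {j // j ∈ J₀} (Subtype.fintype fun j => j ∈ J₀)).filter
          (fun c => z c.1 = true)).card : ℝ) := by
  congr 1
  rw [show (univ.filter (fun j => z j = true)) ∩ J₀ = J₀.filter (fun j => z j = true) from by
    ext j; simp [Finset.mem_filter, Finset.mem_inter, and_comm]]
  refine Finset.card_bij' (fun (j : Fin n) hj => (⟨j, (Finset.mem_filter.1 hj).1⟩ : {j // j ∈ J₀}))
    (fun c _ => c.1) (fun a ha => ?_) (fun c hc => ?_) (fun a ha => rfl) (fun c hc => rfl)
  · simp only [Finset.mem_filter, Finset.mem_univ, true_and]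
    exact (Finset.mem_filter.1 ha).2
  · simp only [Finset.mem_filter] at hc ⊢
    exact ⟨c.2, hc.2⟩

/-- the equivalence sending a matrix pattern to its tuple of rows -/
def eRow (m n : ℕ) : (Fin m × Fin n → Bool) ≃ (Fin m → Fin n → Bool) where
  toFun x := fun i j => x (i, j)
  invFun y := fun q => y q.1 q.2
  left_inv x := rfl
  right_inv y := rfl

open Finset in
lemma rowBad (n : ℕ) (p : ℝ) (hp0 : 0 < p) (hp1 : p ≤ 1) (J₀ : Finset (Fin n)) :
    ∑ z ∈ univ.filter (fun z : Fin n → Bool =>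
        ¬ ((J₀.card : ℝ)*p/2 ≤ (((univ.filter (fun j => z j = true)) ∩ J₀).card : ℝ))),
      ∏ j, (if z j then p else 1 - p)
      ≤ Real.exp (-(J₀.card : ℝ)*p/8) := by
  classical
  set r : Bool → ℝ := fun b => if b then p else 1 - p with hr
  have hr0 : ∀ b, 0 ≤ r b := by intro b; cases b <;> simp [hr] <;> linarith
  have hr1 : r true + r false = 1 := by simp [hr]
  have hcongr : univ.filter (fun z : Fin n → Bool =>
        ¬ ((J₀.card : ℝ)*p/2 ≤ (((univ.filter (fun j => z j = true)) ∩ J₀).card : ℝ)))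
      = univ.filter (fun z : Fin n → Bool =>
          ¬ ((J₀.card : ℝ)*p/2 ≤
            (((@univ {j // j ∈ J₀} (Subtype.fintype fun j => j ∈ J₀)).filter
              (fun c => z c.1 = true)).card : ℝ))) := by
    apply Finset.filter_congr
    intro z _
    rw [card_subtype_inter J₀ z]
  rw [hcongr]
  refine le_trans (le_of_eq (reduce_split (fun (_ : Fin n) (b : Bool) => if b then p else 1 - p)
    (fun _ => hr1) (fun j => j ∈ J₀)
    (fun u : {j // j ∈ J₀} → Bool =>
      ¬ ((J₀.card : ℝ)*p/2 ≤ (((@univ {j // j ∈ J₀} (Subtype.fintype fun j => j ∈ J₀)).filter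
        (fun c => u c = true)).card : ℝ))))) ?_
  have hcard : @Fintype.card {c // c ∈ J₀} (Subtype.fintype fun j => j ∈ J₀) = J₀.card := by
    convert Fintype.card_coe J₀ using 2
  have H := @cnt_chernoff' {c // c ∈ J₀} _ (Subtype.fintype fun j => j ∈ J₀) p hp0.le hp1
  rw [hcard] at H
  exact H

open Finset in
lemma weight_row (m n : ℕ) (r : Bool → ℝ) (x : Fin m × Fin n → Bool) :
    ∏ q, r (x q) = ∏ i, ∏ j, r (eRow m n x i j) :=
  Fintype.prod_prod_type _

open Finset in
lemma partC (m n : ℕ) (p : ℝ) (hp0 : 0 < p) (hp1 : p ≤ 1) (J₀ : Finset (Fin n)) :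
    ∑ x ∈ univ.filter (fun x : Fin m × Fin n → Bool =>
        (((univ.filter (fun i : Fin m =>
            (J₀.card : ℝ)*p/2 ≤
              (((univ.filter (fun j : Fin n => x (i,j) = true)) ∩ J₀).card : ℝ))).card : ℝ)
          ≤ (m:ℝ) * (1 - Real.exp (-(J₀.card : ℝ)*p/8)) / 2)),
      ∏ q, (if x q then p else 1 - p)
      ≤ Real.exp (-(m:ℝ) * (1 - Real.exp (-(J₀.card : ℝ)*p/8)) / 8) := by
  classical
  set r : Bool → ℝ := fun b => if b then p else 1 - p with hr
  have hr0 : ∀ b, 0 ≤ r b := by intro b; cases b <;> simp [hr] <;> linarith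
  have hr1 : r true + r false = 1 := by simp [hr]
  set q' : ℝ := 1 - Real.exp (-(J₀.card : ℝ)*p/8) with hq'
  have hq0 : 0 ≤ q' := by
    have : Real.exp (-(J₀.card : ℝ)*p/8) ≤ 1 := by
      rw [Real.exp_le_one_iff]
      have : (0:ℝ) ≤ (J₀.card : ℝ)*p/8 :=
        div_nonneg (mul_nonneg (Nat.cast_nonneg _) hp0.le) (by norm_num)
      linarith
    rw [hq']; linarith
  have htrans : ∑ x ∈ univ.filter (fun x : Fin m × Fin n → Bool =>
        (((univ.filter (fun i : Fin m =>
            (J₀.card : ℝ)*p/2 ≤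
              (((univ.filter (fun j : Fin n => x (i,j) = true)) ∩ J₀).card : ℝ))).card : ℝ)
          ≤ (m:ℝ) * q' / 2)),
      ∏ qq, r (x qq)
      = ∑ y ∈ univ.filter (fun y : Fin m → Fin n → Bool =>
        (((univ.filter (fun i : Fin m =>
            (J₀.card : ℝ)*p/2 ≤
              (((univ.filter (fun j : Fin n => y i j = true)) ∩ J₀).card : ℝ))).card : ℝ)
          ≤ (m:ℝ) * q' / 2)),
      ∏ i, ∏ j, r (y i j) := by
    apply sum_filter_equiv (eRow m n)
    · intro x; exact Iff.rfl
    · intro x; exact weight_row m n r x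
  rw [htrans]
  have hcher := chernoff (κ := Fin m) (Z := fun _ => Fin n → Bool)
    (w := fun _ z => ∏ j, r (z j))
    (fun _ z => Finset.prod_nonneg fun j _ => hr0 (z j))
    (fun _ => sum_one (fun _ => r) (fun _ => hr1))
    (Y := fun _ z => (J₀.card : ℝ)*p/2 ≤
        (((univ.filter (fun j : Fin n => z j = true)) ∩ J₀).card : ℝ))
    q' hq0 ?_
  · simpa [Fintype.card_fin] using hcher
  · intro i
    have hbad := rowBad n p hp0 hp1 J₀
    have := good_lb (fun z : Fin n → Bool => ∏ j, r (z j))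
      (sum_one (fun _ => r) (fun _ => hr1)) _ _ hbad
    rw [hq']
    exact this

open Finset in
/-- heavy column predicate -/
def heavyP (m n : ℕ) (p : ℝ) (j : Fin n) (x : Fin m × Fin n → Bool) : Prop :=
  (m:ℝ)*p/2 ≤ ((univ.filter (fun i => x (i,j) = true)).card : ℝ)

noncomputable instance heavyP.dec (m n : ℕ) (p : ℝ) (j : Fin n) (x : Fin m × Fin n → Bool) :
    Decidable (heavyP m n p j x) := Real.decidableLE _ _

open Finset in
/-- good row predicate relative to a column set -/
def goodP {m n : ℕ} (p : ℝ) (J : Finset (Fin n)) (i : Fin m) (x : Fin m × Fin n → Bool) : Prop :=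
  (J.card : ℝ)*p/2 ≤ (((univ.filter (fun j => x (i,j) = true)) ∩ J).card : ℝ)

noncomputable instance goodP.dec {m n : ℕ} (p : ℝ) (J : Finset (Fin n)) (i : Fin m)
    (x : Fin m × Fin n → Bool) : Decidable (goodP p J i x) := Real.decidableLE _ _

open Finset in
lemma part2fin (m n : ℕ) (p : ℝ) (hp0 : 0 < p) (hp1 : p ≤ 1) (J₀ : Finset (Fin n)) :
    ∑ x ∈ univ.filter (fun x : Fin m × Fin n → Bool =>
        (univ.filter (fun j => heavyP m n p j x)) = J₀ ∧
        (((univ.filter (fun i : Fin m =>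
            goodP p (univ.filter (fun j => heavyP m n p j x)) i x)).card : ℝ)
          ≤ (m:ℝ) * (1 - Real.exp (-(J₀.card : ℝ)*p/8)) / 2)),
      ∏ q, (if x q then p else 1 - p)
    ≤ Real.exp (-(m:ℝ) * (1 - Real.exp (-(J₀.card : ℝ)*p/8)) / 8)
      * ∑ x ∈ univ.filter (fun x : Fin m × Fin n → Bool =>
          (univ.filter (fun j => heavyP m n p j x)) = J₀),
        ∏ q, (if x q then p else 1 - p) := by
  classical
  set r : Bool → ℝ := fun b => if b then p else 1 - p with hr
  have hr0 : ∀ b, 0 ≤ r b := by intro b; cases b <;> simp [hr] <;> linarith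
  have hr1 : r true + r false = 1 := by simp [hr]
  set c : ℝ := Real.exp (-(m:ℝ) * (1 - Real.exp (-(J₀.card : ℝ)*p/8)) / 8) with hc
  set Bp : (Fin m × Fin n → Bool) → Prop := fun x => ∀ j ∈ J₀, heavyP m n p j x with hBp
  set Bm : (Fin m × Fin n → Bool) → Prop :=
    fun x => ∀ j, j ∉ J₀ → ¬ heavyP m n p j x with hBm
  set QA : (Fin m × Fin n → Bool) → Prop := fun x =>
    (((univ.filter (fun i : Fin m => goodP p J₀ i x)).card : ℝ)
      ≤ (m:ℝ) * (1 - Real.exp (-(J₀.card : ℝ)*p/8)) / 2) with hQA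
  have hW0 : ∀ x : Fin m × Fin n → Bool, 0 ≤ ∏ q, r (x q) :=
    fun x => Finset.prod_nonneg fun q _ => hr0 (x q)
  -- the identification of the event {Jpat = J₀}
  have hQBiff : ∀ x : Fin m × Fin n → Bool,
      (univ.filter (fun j => heavyP m n p j x)) = J₀ ↔ (Bp x ∧ Bm x) := by
    intro x
    rw [Finset.ext_iff]
    constructor
    · intro h
      constructor
      · intro j hj
        have := (h j).2 hj
        simpa using this
      · intro j hj hheavy
        exact hj ((h j).1 (by simpa using hheavy))
    · intro ⟨h1, h2⟩ j
      simp only [Finset.mem_filter, Finset.mem_univ, true_and]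
      constructor
      · intro hh
        by_contra hj
        exact h2 j hj hh
      · intro hj
        exact h1 j hj
  -- monotonicity facts
  have hle : ∀ (x y : Fin m × Fin n → Bool), x ≤ y → ∀ q, x q = true → y q = true := by
    intro x y hxy q hq
    have h2 := hxy q
    rw [hq] at h2
    exact (le_antisymm h2 (Bool.le_true _)).symm
  have hheavymono : ∀ (x y : Fin m × Fin n → Bool), x ≤ y → ∀ j,
      heavyP m n p j x → heavyP m n p j y := by
    intro x y hxy j hh
    refine le_trans hh ?_
    have : (univ.filter (fun i => x (i,j) = true)) ⊆ univ.filter (fun i => y (i,j) = true) := by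
      apply Finset.monotone_filter_right
      intro i _ hi
      exact hle x y hxy (i,j) hi
    exact_mod_cast Nat.cast_le.2 (Finset.card_le_card this)
  have hgoodmono : ∀ (x y : Fin m × Fin n → Bool), x ≤ y → ∀ i,
      goodP p J₀ i x → goodP p J₀ i y := by
    intro x y hxy i hg
    refine le_trans hg ?_
    have : ((univ.filter (fun j => x (i,j) = true)) ∩ J₀)
        ⊆ ((univ.filter (fun j => y (i,j) = true)) ∩ J₀) := by
      apply Finset.inter_subset_inter_right
      apply Finset.monotone_filter_right
      intro j _ hj
      exact hle x y hxy (i,j) hj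
    exact_mod_cast Nat.cast_le.2 (Finset.card_le_card this)
  -- invariance facts
  have hQAinv : ∀ x y : Fin m × Fin n → Bool,
      (∀ q : Fin m × Fin n, q.2 ∈ J₀ → x q = y q) → QA x → QA y := by
    intro x y hagree hx
    have hcnt : ∀ i : Fin m, ((univ.filter (fun j => x (i,j) = true)) ∩ J₀)
        = ((univ.filter (fun j => y (i,j) = true)) ∩ J₀) := by
      intro i
      ext j
      simp only [Finset.mem_inter, Finset.mem_filter, Finset.mem_univ, true_and]
      constructor
      · rintro ⟨h1, h2⟩; exact ⟨(hagree (i,j) h2) ▸ h1, h2⟩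
      · rintro ⟨h1, h2⟩; exact ⟨(hagree (i,j) h2).symm ▸ h1, h2⟩
    have hff : univ.filter (fun i => goodP p J₀ i x) = univ.filter (fun i => goodP p J₀ i y) := by
      apply Finset.filter_congr
      intro i _
      unfold goodP
      rw [hcnt i]
    simp only [hQA] at hx ⊢
    rw [← hff]
    exact hx
  have hBminv : ∀ x y : Fin m × Fin n → Bool,
      (∀ q : Fin m × Fin n, ¬ q.2 ∈ J₀ → x q = y q) → Bm x → Bm y := by
    intro x y hag hx j hj hh
    apply hx j hj
    have hcol : (univ.filter (fun i => x (i,j) = true)) = univ.filter (fun i => y (i,j) = true) := by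
      apply Finset.filter_congr
      intro i _
      rw [hag (i,j) hj]
    unfold heavyP at hh ⊢
    rw [hcol]
    exact hh
  have hBpinv : ∀ x y : Fin m × Fin n → Bool,
      (∀ q : Fin m × Fin n, q.2 ∈ J₀ → x q = y q) → Bp x → Bp y := by
    intro x y hag hx j hj
    have hcol : (univ.filter (fun i => x (i,j) = true)) = univ.filter (fun i => y (i,j) = true) := by
      apply Finset.filter_congr
      intro i _
      rw [hag (i,j) hj]
    have := hx j hj
    unfold heavyP at this ⊢
    rw [← hcol]
    exact this
  -- filter identifications
  have hfilter1 : univ.filter (fun x : Fin m × Fin n → Bool =>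
        (univ.filter (fun j => heavyP m n p j x)) = J₀ ∧
        (((univ.filter (fun i : Fin m =>
            goodP p (univ.filter (fun j => heavyP m n p j x)) i x)).card : ℝ)
          ≤ (m:ℝ) * (1 - Real.exp (-(J₀.card : ℝ)*p/8)) / 2))
      = univ.filter (fun x => Bp x ∧ (QA x ∧ Bm x)) := by
    apply Finset.filter_congr
    intro x _
    constructor
    · rintro ⟨h1, h2⟩
      have hb := (hQBiff x).1 h1
      rw [h1] at h2
      exact ⟨hb.1, h2, hb.2⟩
    · rintro ⟨h1, h2, h3⟩
      have hQB := (hQBiff x).2 ⟨h1, h3⟩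
      rw [hQB]
      exact ⟨rfl, h2⟩
  have hfilter2 : univ.filter (fun x : Fin m × Fin n → Bool =>
        (univ.filter (fun j => heavyP m n p j x)) = J₀)
      = univ.filter (fun x => Bp x ∧ Bm x) := by
    apply Finset.filter_congr
    intro x _
    exact hQBiff x
  -- key inequalities
  have hHarris := harris (κ := Fin m × Fin n) (w := fun _ b => r b) (fun _ b => hr0 b)
    (fun _ => hr1) Bp (fun x => QA x ∧ Bm x)
    (fun x y hxy h => fun j hj => hheavymono x y hxy j (h j hj))
    (by
      intro x y hxy hy
      constructor
      · have hsub : univ.filter (fun i => goodP p J₀ i x)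
            ⊆ univ.filter (fun i => goodP p J₀ i y) := by
          apply Finset.monotone_filter_right
          intro i _ hi
          exact hgoodmono x y hxy i hi
        have hcard : ((univ.filter (fun i => goodP p J₀ i x)).card : ℝ)
            ≤ ((univ.filter (fun i => goodP p J₀ i y)).card : ℝ) :=
          Nat.cast_le.2 (Finset.card_le_card hsub)
        simp only [hQA] at hy ⊢
        exact le_trans hcard hy.1
      · intro j hj hh
        exact hy.2 j hj (hheavymono x y hxy j hh))
  have hfs1 := factor_split (κ := Fin m × Fin n) (w := fun _ b => r b) (fun _ => hr1)
    (fun q => q.2 ∈ J₀) QA Bm hQAinv hBminv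
  have hfs2 := factor_split (κ := Fin m × Fin n) (w := fun _ b => r b) (fun _ => hr1)
    (fun q => q.2 ∈ J₀) Bp Bm hBpinv hBminv
  have hAbound : ∑ x ∈ univ.filter QA, ∏ q, r (x q) ≤ c := partC m n p hp0 hp1 J₀
  have hBp0 : (0:ℝ) ≤ ∑ x ∈ univ.filter Bp, ∏ q, r (x q) :=
    Finset.sum_nonneg fun x _ => hW0 x
  have hBm0 : (0:ℝ) ≤ ∑ x ∈ univ.filter Bm, ∏ q, r (x q) :=
    Finset.sum_nonneg fun x _ => hW0 x
  have hc0 : 0 ≤ c := by rw [hc]; exact (Real.exp_pos _).le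
  calc ∑ x ∈ univ.filter (fun x : Fin m × Fin n → Bool =>
        (univ.filter (fun j => heavyP m n p j x)) = J₀ ∧
        (((univ.filter (fun i : Fin m =>
            goodP p (univ.filter (fun j => heavyP m n p j x)) i x)).card : ℝ)
          ≤ (m:ℝ) * (1 - Real.exp (-(J₀.card : ℝ)*p/8)) / 2)),
      ∏ q, r (x q)
      = ∑ x ∈ univ.filter (fun x => Bp x ∧ (QA x ∧ Bm x)), ∏ q, r (x q) := by
        rw [hfilter1]
    _ ≤ (∑ x ∈ univ.filter Bp, ∏ q, r (x q))
        * ∑ x ∈ univ.filter (fun x => QA x ∧ Bm x), ∏ q, r (x q) := hHarris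
    _ = (∑ x ∈ univ.filter Bp, ∏ q, r (x q))
        * ((∑ x ∈ univ.filter QA, ∏ q, r (x q)) * ∑ x ∈ univ.filter Bm, ∏ q, r (x q)) := by
        rw [hfs1]
    _ ≤ (∑ x ∈ univ.filter Bp, ∏ q, r (x q))
        * (c * ∑ x ∈ univ.filter Bm, ∏ q, r (x q)) := by
        apply mul_le_mul_of_nonneg_left _ hBp0
        exact mul_le_mul_of_nonneg_right hAbound hBm0
    _ = c * ((∑ x ∈ univ.filter Bp, ∏ q, r (x q)) * ∑ x ∈ univ.filter Bm, ∏ q, r (x q)) := by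
        ring
    _ = c * ∑ x ∈ univ.filter (fun x => Bp x ∧ Bm x), ∏ q, r (x q) := by
        rw [hfs2]
    _ = c * ∑ x ∈ univ.filter (fun x : Fin m × Fin n → Bool =>
          (univ.filter (fun j => heavyP m n p j x)) = J₀), ∏ q, r (x q) := by
        rw [hfilter2]

open MeasureTheory ProbabilityTheory Finset in
lemma measure_pattern {Ω : Type} [MeasurableSpace Ω] (μ : Measure Ω) [IsProbabilityMeasure μ]
    (m n : ℕ) (p : ℝ) (hp0 : 0 ≤ p) (hp1 : p ≤ 1)
    (M : Fin m → Fin n → Ω → ℝ)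
    (hM_meas : ∀ i j, Measurable (M i j))
    (hM_bern : ∀ i j, Measure.map (M i j) μ
      = ENNReal.ofReal p • Measure.dirac (1:ℝ) + ENNReal.ofReal (1-p) • Measure.dirac (0:ℝ))
    (hindep : iIndepFun (fun q : Fin m × Fin n => M q.1 q.2) μ)
    (Q : (Fin m × Fin n → Bool) → Prop) [DecidablePred Q] :
    μ {ω | Q (fun q => decide (M q.1 q.2 ω = 1))}
      = ENNReal.ofReal (∑ x ∈ univ.filter Q, ∏ q, (if x q then p else 1 - p)) := by
  classical
  set St : Bool → Set ℝ := fun b => if b then {1} else {1}ᶜ with hSt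
  have hStm : ∀ b, MeasurableSet (St b) := by
    intro b
    cases b
    · simpa [hSt] using (measurableSet_singleton (1:ℝ)).compl
    · simpa [hSt] using measurableSet_singleton (1:ℝ)
  have hmarg : ∀ (i : Fin m) (j : Fin n) (b : Bool),
      μ ((M i j) ⁻¹' (St b)) = ENNReal.ofReal (if b then p else 1 - p) := by
    intro i j b
    have hmap := hM_bern i j
    have happ := Measure.map_apply (μ := μ) (hM_meas i j) (hStm b)
    rw [hmap] at happ
    rw [← happ]
    cases b
    · simp only [hSt, if_false, Bool.false_eq_true]
      rw [Measure.add_apply, Measure.smul_apply, Measure.smul_apply,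
        Measure.dirac_apply' _ ((measurableSet_singleton (1:ℝ)).compl),
        Measure.dirac_apply' _ ((measurableSet_singleton (1:ℝ)).compl)]
      simp [Set.indicator]
    · simp only [hSt, if_true]
      rw [Measure.add_apply, Measure.smul_apply, Measure.smul_apply,
        Measure.dirac_apply' _ (measurableSet_singleton (1:ℝ)),
        Measure.dirac_apply' _ (measurableSet_singleton (1:ℝ))]
      simp [Set.indicator]
  -- the atoms
  set A : (Fin m × Fin n → Bool) → Set Ω :=
    fun x => ⋂ q ∈ (univ : Finset (Fin m × Fin n)), (M q.1 q.2) ⁻¹' (St (x q)) with hA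
  have hAmeas : ∀ x, MeasurableSet (A x) := by
    intro x
    exact MeasurableSet.biInter (Finset.countable_toSet _)
      (fun q _ => hM_meas q.1 q.2 (hStm (x q)))
  have hAatom : ∀ x ω, ω ∈ A x ↔ (fun q => decide (M q.1 q.2 ω = 1)) = x := by
    intro x ω
    rw [hA]
    simp only [Set.mem_iInter, Finset.mem_univ, forall_true_left, Set.mem_preimage]
    constructor
    · intro h
      funext q
      have := h q
      cases hxq : x q
      · rw [hxq] at this
        simp only [hSt, if_false, Set.mem_compl_iff, Set.mem_singleton_iff, Bool.false_eq_true] at this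
        simp [this]
      · rw [hxq] at this
        simp only [hSt, if_true, Set.mem_singleton_iff] at this
        simp [this]
    · intro h q
      rw [← h]
      cases hd : decide (M q.1 q.2 ω = 1)
      · have : ¬ (M q.1 q.2 ω = 1) := by simpa using hd
        simp [hSt, this]
      · have : M q.1 q.2 ω = 1 := by simpa using hd
        simp [hSt, this]
  have hAmu : ∀ x, μ (A x) = ENNReal.ofReal (∏ q, (if x q then p else 1 - p)) := by
    intro x
    have := hindep.measure_inter_preimage_eq_mul (univ : Finset (Fin m × Fin n))
      (sets := fun q => St (x q)) (fun q _ => hStm (x q))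
    rw [hA]
    rw [this]
    rw [ENNReal.ofReal_prod_of_nonneg (fun q _ => by split <;> linarith)]
    apply Finset.prod_congr rfl
    intro q _
    exact hmarg q.1 q.2 (x q)
  have hdecomp : {ω | Q (fun q => decide (M q.1 q.2 ω = 1))}
      = ⋃ x ∈ univ.filter Q, A x := by
    ext ω
    simp only [Set.mem_setOf_eq, Set.mem_iUnion, Finset.mem_filter, Finset.mem_univ, true_and]
    constructor
    · intro h
      exact ⟨(fun q => decide (M q.1 q.2 ω = 1)), h, (hAatom _ ω).2 rfl⟩
    · rintro ⟨x, hQx, hωx⟩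
      rw [(hAatom x ω).1 hωx]
      exact hQx
  rw [hdecomp]
  rw [measure_biUnion_finset ?_ (fun x _ => hAmeas x)]
  · rw [ENNReal.ofReal_sum_of_nonneg (fun x _ => Finset.prod_nonneg fun q _ => by split <;> linarith)]
    exact Finset.sum_congr rfl fun x _ => hAmu x
  · intro x hx y hy hxy
    simp only [Function.onFun]
    rw [Set.disjoint_left]
    intro ω hωx hωy
    exact hxy (((hAatom x ω).1 hωx).symm.trans ((hAatom y ω).1 hωy))


/-- Lemma D.1 (the sets `J` and `I` of well-observed columns/rows are large with high
probability).  The second bound, whose threshold involves the random quantity `|J|`,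
is stated conditionally on the value of `J`. -/
theorem IandJ
    {Ω : Type} [MeasurableSpace Ω] (μ : Measure Ω) [IsProbabilityMeasure μ]
    (m n : ℕ) (p : ℝ) (hp : p ∈ Set.Ioc (0:ℝ) 1)
    (M : Fin m → Fin n → Ω → ℝ)
    (hM_meas : ∀ i j, Measurable (M i j))
    (hM_bern : ∀ i j, Measure.map (M i j) μ
      = ENNReal.ofReal p • Measure.dirac (1:ℝ) + ENNReal.ofReal (1-p) • Measure.dirac (0:ℝ))
    (hindep : iIndepFun (fun q : Fin m × Fin n => M q.1 q.2) μ)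
    (Jset : Ω → Finset (Fin n))
    (hJset : ∀ ω, Jset ω = Finset.univ.filter
      (fun j => (m:ℝ)*p/2 ≤ ((Finset.univ.filter fun i => M i j ω = 1).card : ℝ)))
    (Iset : Ω → Finset (Fin m))
    (hIset : ∀ ω, Iset ω = Finset.univ.filter
      (fun i => ((Jset ω).card : ℝ)*p/2
        ≤ (((Finset.univ.filter fun j => M i j ω = 1) ∩ Jset ω).card : ℝ))) :
    μ {ω | ((Jset ω).card : ℝ) ≤ (n:ℝ)*(1 - Real.exp (-(m:ℝ)*p/8))/2}
        ≤ ENNReal.ofReal (Real.exp (-(n:ℝ)*(1 - Real.exp (-(m:ℝ)*p/8))/8))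
    ∧ ∀ J₀ : Finset (Fin n),
        μ ({ω | Jset ω = J₀}
            ∩ {ω | ((Iset ω).card : ℝ) ≤ (m:ℝ)*(1 - Real.exp (-(J₀.card:ℝ)*p/8))/2})
          ≤ ENNReal.ofReal (Real.exp (-(m:ℝ)*(1 - Real.exp (-(J₀.card:ℝ)*p/8))/8))
            * μ {ω | Jset ω = J₀} := by
  classical
  obtain ⟨hp0, hp1⟩ := hp
  have hJpat : ∀ ω, Jset ω = univ.filter (fun j =>
      heavyP m n p j (fun q : Fin m × Fin n => decide (M q.1 q.2 ω = 1))) := by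
    intro ω
    rw [hJset ω]
    apply Finset.filter_congr
    intro j _
    unfold heavyP
    have hcnt : univ.filter (fun i => M i j ω = 1)
        = univ.filter (fun i : Fin m =>
            (fun q : Fin m × Fin n => decide (M q.1 q.2 ω = 1)) (i, j) = true) := by
      apply Finset.filter_congr
      intro i _
      simp
    rw [hcnt]
  have hIpat : ∀ ω, Iset ω = univ.filter (fun i =>
      goodP p (univ.filter (fun j =>
        heavyP m n p j (fun q : Fin m × Fin n => decide (M q.1 q.2 ω = 1)))) i
        (fun q : Fin m × Fin n => decide (M q.1 q.2 ω = 1))) := by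
    intro ω
    rw [hIset ω]
    apply Finset.filter_congr
    intro i _
    unfold goodP
    rw [← hJpat ω]
    have hcnt : univ.filter (fun j => M i j ω = 1)
        = univ.filter (fun j : Fin n =>
            (fun q : Fin m × Fin n => decide (M q.1 q.2 ω = 1)) (i, j) = true) := by
      apply Finset.filter_congr
      intro j _
      simp
    rw [hcnt]
  constructor
  · -- part 1
    have e1 : {ω | ((Jset ω).card : ℝ) ≤ (n:ℝ)*(1 - Real.exp (-(m:ℝ)*p/8))/2}
        = {ω | (fun x : Fin m × Fin n → Bool =>
            (((univ.filter (fun j => heavyP m n p j x)).card : ℝ)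
              ≤ (n:ℝ)*(1 - Real.exp (-(m:ℝ)*p/8))/2))
            (fun q : Fin m × Fin n => decide (M q.1 q.2 ω = 1))} := by
      ext ω
      simp only [Set.mem_setOf_eq]
      rw [hJpat ω]
    rw [e1]
    refine le_trans (le_of_eq (measure_pattern μ m n p hp0.le hp1 M hM_meas hM_bern hindep
      (Q := fun x : Fin m × Fin n → Bool =>
        (((univ.filter (fun j => heavyP m n p j x)).card : ℝ)
          ≤ (n:ℝ)*(1 - Real.exp (-(m:ℝ)*p/8))/2)))) ?_
    apply ENNReal.ofReal_le_ofReal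
    have := partA m n p hp0 hp1
    exact this
  · -- part 2
    intro J₀
    have e2 : ({ω | Jset ω = J₀}
          ∩ {ω | ((Iset ω).card : ℝ) ≤ (m:ℝ)*(1 - Real.exp (-(J₀.card:ℝ)*p/8))/2})
        = {ω | (fun x : Fin m × Fin n → Bool =>
            (univ.filter (fun j => heavyP m n p j x)) = J₀ ∧
            (((univ.filter (fun i : Fin m =>
                goodP p (univ.filter (fun j => heavyP m n p j x)) i x)).card : ℝ)
              ≤ (m:ℝ) * (1 - Real.exp (-(J₀.card : ℝ)*p/8)) / 2))
            (fun q : Fin m × Fin n => decide (M q.1 q.2 ω = 1))} := by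
      ext ω
      simp only [Set.mem_inter_iff, Set.mem_setOf_eq]
      rw [hJpat ω, hIpat ω]
    have e3 : {ω | Jset ω = J₀}
        = {ω | (fun x : Fin m × Fin n → Bool =>
            (univ.filter (fun j => heavyP m n p j x)) = J₀)
            (fun q : Fin m × Fin n => decide (M q.1 q.2 ω = 1))} := by
      ext ω
      simp only [Set.mem_setOf_eq]
      rw [hJpat ω]
    have hB : μ {ω | Jset ω = J₀}
        = ENNReal.ofReal (∑ x ∈ univ.filter (fun x : Fin m × Fin n → Bool =>
            (univ.filter (fun j => heavyP m n p j x)) = J₀),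
          ∏ q, (if x q then p else 1 - p)) := by
      rw [e3]
      exact measure_pattern μ m n p hp0.le hp1 M hM_meas hM_bern hindep
        (Q := fun x : Fin m × Fin n → Bool =>
          (univ.filter (fun j => heavyP m n p j x)) = J₀)
    rw [e2]
    refine le_trans (le_of_eq (measure_pattern μ m n p hp0.le hp1 M hM_meas hM_bern hindep
      (Q := fun x : Fin m × Fin n → Bool =>
        (univ.filter (fun j => heavyP m n p j x)) = J₀ ∧
        (((univ.filter (fun i : Fin m =>
            goodP p (univ.filter (fun j => heavyP m n p j x)) i x)).card : ℝ)
          ≤ (m:ℝ) * (1 - Real.exp (-(J₀.card : ℝ)*p/8)) / 2)))) ?_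
    refine le_trans (ENNReal.ofReal_le_ofReal (part2fin m n p hp0 hp1 J₀)) ?_
    rw [ENNReal.ofReal_mul (Real.exp_pos _).le]
    rw [hB]
end

section
/- (Lemma D.9 / sup_noise: uniform closeness of the data-based and noise-based characteristic function estimators) Fix a finite triple set T_i and condition on the latent features (hence on the signal differences ΔA(i',j₁,j₂) = A(i',j₁) − A(i',j₂)). Let φ̂_{N,i}(t) = |(1/|T_i|) Σ_{(i',j₁,j₂)∈T_i} cos(t(Z(i',j₁) − Z(i',j₂)))|^{1/2} and φ̂*_{N,i}(t) = |(1/|T_i|) Σ_{(i',j₁,j₂)∈T_i} cos(t(N(i',j₁) − N(i',j₂)))|^{1/2}, where Z = A + N. Set ΔA = max_{T_i} |A(i',j₁) − A(i',j₂)| and ΔN = max_{T_i} |N(i',j₁) − N(i',j₂)|. Then for any Λ > 0, any positive integer N, and any s > ‖Δ^{(i)}_{N,Λ}‖_∞^{1/2} where ‖Δ^{(i)}_{N,Λ}‖_∞ = (Λ² ΔA / (2N)) [ (N+2) ΔA + 4 ΔN ]: P( sup_{|t| ≤ Λ} |φ̂_{N,i}(t) − φ̂*_{N,i}(t)| > s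 ) ≤ 2N exp( − (|T_i| / (2 Λ² ΔA²)) ( s² − ‖Δ^{(i)}_{N,Λ}‖_∞ )² ). -/
open MeasureTheory ProbabilityTheory
open scoped ENNReal


lemma abs_sin_sub_sin_le (a b : ℝ) : |Real.sin a - Real.sin b| ≤ |a - b| := by
  rw [Real.sin_sub_sin]
  have h1 : |Real.sin ((a-b)/2)| ≤ |(a-b)/2| := Real.abs_sin_le_abs
  have h2 : |Real.cos ((a+b)/2)| ≤ 1 := Real.abs_cos_le_one _
  have h3 : |(a-b)/2| = |a-b|/2 := by rw [abs_div]; norm_num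
  have : |2 * Real.sin ((a-b)/2) * Real.cos ((a+b)/2)|
      = 2 * |Real.sin ((a-b)/2)| * |Real.cos ((a+b)/2)| := by
    rw [abs_mul, abs_mul]; norm_num
  rw [this]
  nlinarith [abs_nonneg (Real.sin ((a-b)/2)), abs_nonneg (Real.cos ((a+b)/2))]

lemma my_sqrt_add_le {a b : ℝ} (ha : 0 ≤ a) (hb : 0 ≤ b) :
    Real.sqrt (a + b) ≤ Real.sqrt a + Real.sqrt b := by
  have h : a + b ≤ (Real.sqrt a + Real.sqrt b)^2 := by
    rw [add_sq, Real.sq_sqrt ha, Real.sq_sqrt hb]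
    nlinarith [Real.sqrt_nonneg a, Real.sqrt_nonneg b]
  have h2 := Real.sqrt_le_sqrt h
  rwa [Real.sqrt_sq (by positivity)] at h2

lemma abs_sqrt_sub_sqrt_le (x y : ℝ) :
    abs (Real.sqrt |x| - Real.sqrt |y|) ≤ Real.sqrt |x - y| := by
  have aux : ∀ u v : ℝ, |v| ≤ |u| →
      Real.sqrt |u| - Real.sqrt |v| ≤ Real.sqrt |u - v| := by
    intro u v huv
    have h1 : |u| ≤ |v| + |u - v| := by
      have := abs_sub_abs_le_abs_sub u v; linarith
    have h4 := Real.sqrt_le_sqrt h1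
    have := my_sqrt_add_le (abs_nonneg v) (abs_nonneg (u-v))
    linarith
  rcases le_total |y| |x| with h | h
  · rw [abs_of_nonneg (by have := Real.sqrt_le_sqrt h; linarith)]
    exact aux x y h
  · rw [abs_of_nonpos (by have := Real.sqrt_le_sqrt h; linarith)]
    have := aux y x h
    rw [abs_sub_comm] at this; linarith

lemma integrable_of_bdd {Ω : Type} [MeasurableSpace Ω] {μ : Measure Ω} [IsFiniteMeasure μ]
    {f : Ω → ℝ} (hm : Measurable f) {C : ℝ} (hC : ∀ ω, |f ω| ≤ C) : Integrable f μ :=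
  ⟨hm.aestronglyMeasurable, MeasureTheory.HasFiniteIntegral.of_bounded
    (C := C) (Filter.Eventually.of_forall (fun ω => by simpa using hC ω))⟩

lemma mgf_le_of_bdd {Ω : Type} [MeasurableSpace Ω] {μ : Measure Ω} [IsProbabilityMeasure μ]
    {V : Ω → ℝ} (hm : Measurable V) {c : ℝ} (hc : 0 < c) (hb : ∀ ω, |V ω| ≤ c)
    (h0 : ∫ ω, V ω ∂μ = 0) (l : ℝ) :
    mgf V μ l ≤ Real.exp (l^2 * c^2 / 2) := by
  have key : ∀ ω, Real.exp (l * V ω)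
      ≤ Real.cosh (l*c) + (Real.sinh (l*c) / c) * V ω := by
    intro ω
    have hv := hb ω
    set v := V ω with hvdef
    have hv1 : -c ≤ v := (abs_le.1 hv).1
    have hv2 : v ≤ c := (abs_le.1 hv).2
    have wa : (0:ℝ) ≤ (c - v)/(2*c) := div_nonneg (by linarith) (by linarith)
    have wb : (0:ℝ) ≤ (c + v)/(2*c) := div_nonneg (by linarith) (by linarith)
    have wab : (c - v)/(2*c) + (c + v)/(2*c) = 1 := by field_simp; ring
    have hconv := convexOn_exp.2 (Set.mem_univ (l * -c)) (Set.mem_univ (l * c)) wa wb wab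
    have harg : ((c - v)/(2*c)) • (l * -c) + ((c + v)/(2*c)) • (l * c) = l * v := by
      simp only [smul_eq_mul]; field_simp; ring
    rw [harg] at hconv
    simp only [smul_eq_mul] at hconv
    calc Real.exp (l * v) ≤ (c - v)/(2*c) * Real.exp (l * -c) + (c + v)/(2*c) * Real.exp (l * c) := hconv
      _ = Real.cosh (l*c) + (Real.sinh (l*c) / c) * v := by
          rw [Real.cosh_eq, Real.sinh_eq, mul_neg, Real.exp_neg]
          field_simp
          ring
  have hint1 : Integrable (fun ω => Real.exp (l * V ω)) μ := by
    refine integrable_of_bdd (hm.const_mul l).exp (C := Real.exp (|l| * c)) (fun ω => ?_)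
    rw [abs_of_pos (Real.exp_pos _), Real.exp_le_exp]
    calc l * V ω ≤ |l * V ω| := le_abs_self _
      _ = |l| * |V ω| := abs_mul _ _
      _ ≤ |l| * c := by gcongr; exact hb ω
  have hint2 : Integrable (fun ω => Real.cosh (l*c) + (Real.sinh (l*c) / c) * V ω) μ :=
    (integrable_const _).add ((integrable_of_bdd hm hb).const_mul _)
  have := integral_mono hint1 hint2 key
  rw [integral_add (integrable_const _) ((integrable_of_bdd hm hb).const_mul _),
    integral_const, integral_const_mul, h0] at this
  simp only [probReal_univ, smul_eq_mul, one_mul, mul_zero, add_zero] at this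
  calc mgf V μ l = ∫ ω, Real.exp (l * V ω) ∂μ := rfl
    _ ≤ Real.cosh (l*c) := this
    _ ≤ Real.exp ((l*c)^2/2) := Real.cosh_le_exp_half_sq _
    _ = Real.exp (l^2*c^2/2) := by ring_nf

lemma integrable_of_bdd' {Ω : Type} [MeasurableSpace Ω] {μ : Measure Ω} [IsFiniteMeasure μ]
    {f : Ω → ℝ} (hm : Measurable f) {C : ℝ} (hC : ∀ ω, |f ω| ≤ C) : Integrable f μ :=
  ⟨hm.aestronglyMeasurable, MeasureTheory.HasFiniteIntegral.of_bounded
    (C := C) (Filter.Eventually.of_forall (fun ω => by simpa using hC ω))⟩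

lemma chernoff_sum {Ω : Type} [MeasurableSpace Ω] {μ : Measure Ω} [IsProbabilityMeasure μ]
    {K : ℕ} {U : Fin K → Ω → ℝ} (hm : ∀ k, Measurable (U k)) {c : ℝ} (hc : 0 < c)
    (hb : ∀ k ω, |U k ω| ≤ c)
    (hmgfle : ∀ k (l : ℝ), mgf (U k) μ l ≤ Real.exp (l^2 * c^2 / 2))
    (hmgf : ∀ l : ℝ, mgf (fun ω => ∑ k, U k ω) μ l = ∏ k, mgf (U k) μ l)
    {u : ℝ} (hu : 0 ≤ u) :
    μ {ω | (K:ℝ)*u ≤ ∑ k, U k ω} ≤ ENNReal.ofReal (Real.exp (-((K:ℝ)*u^2/(2*c^2)))) := by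
  set l : ℝ := u / c^2 with hl
  have hl0 : 0 ≤ l := div_nonneg hu (by positivity)
  have hSm : Measurable (fun ω => ∑ k, U k ω) := by
    exact Finset.measurable_sum _ (fun k _ => hm k)
  have hSb : ∀ ω, |∑ k, U k ω| ≤ (K:ℝ) * c := by
    intro ω
    calc |∑ k, U k ω| ≤ ∑ k, |U k ω| := Finset.abs_sum_le_sum_abs _ _
      _ ≤ ∑ _k : Fin K, c := Finset.sum_le_sum (fun k _ => hb k ω)
      _ = (K:ℝ) * c := by simp [mul_comm]
  have hint : Integrable (fun ω => Real.exp (l * (∑ k, U k ω))) μ := by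
    refine integrable_of_bdd' ((hSm.const_mul l).exp) (C := Real.exp (|l| * ((K:ℝ)*c)))
      (fun ω => ?_)
    rw [abs_of_pos (Real.exp_pos _), Real.exp_le_exp]
    calc l * (∑ k, U k ω) ≤ |l * (∑ k, U k ω)| := le_abs_self _
      _ = |l| * |∑ k, U k ω| := abs_mul _ _
      _ ≤ |l| * ((K:ℝ)*c) := by gcongr; exact hSb ω
  have hcher := measure_ge_le_exp_mul_mgf (μ := μ) (X := fun ω => ∑ k, U k ω)
    ((K:ℝ)*u) hl0 hint
  have hprod : mgf (fun ω => ∑ k, U k ω) μ l ≤ Real.exp ((K:ℝ) * (l^2*c^2/2)) := by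
    rw [hmgf l]
    calc ∏ k, mgf (U k) μ l ≤ ∏ _k : Fin K, Real.exp (l^2*c^2/2) :=
          Finset.prod_le_prod (fun k _ => mgf_nonneg) (fun k _ => hmgfle k l)
      _ = Real.exp ((K:ℝ) * (l^2*c^2/2)) := by
          rw [Finset.prod_const, Real.exp_nat_mul]; simp
  have hfin : (μ {ω | (K:ℝ)*u ≤ ∑ k, U k ω}).toReal ≤ Real.exp (-((K:ℝ)*u^2/(2*c^2))) := by
    refine hcher.trans ?_
    calc Real.exp (-l * ((K:ℝ)*u)) * mgf (fun ω => ∑ k, U k ω) μ l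
        ≤ Real.exp (-l * ((K:ℝ)*u)) * Real.exp ((K:ℝ) * (l^2*c^2/2)) := by
          gcongr
      _ = Real.exp (-((K:ℝ)*u^2/(2*c^2))) := by
          rw [← Real.exp_add]
          congr 1
          rw [hl]
          field_simp
          ring
  calc μ {ω | (K:ℝ)*u ≤ ∑ k, U k ω}
      = ENNReal.ofReal ((μ {ω | (K:ℝ)*u ≤ ∑ k, U k ω}).toReal) :=
        (ENNReal.ofReal_toReal (measure_ne_top _ _)).symm
    _ ≤ ENNReal.ofReal (Real.exp (-((K:ℝ)*u^2/(2*c^2)))) := ENNReal.ofReal_le_ofReal hfin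

lemma mgf_sum_pair {Ω : Type} [MeasurableSpace Ω] {μ : Measure Ω} [IsProbabilityMeasure μ]
    {K : ℕ} {Np : Fin K × Fin 2 → Ω → ℝ} (hmeas : ∀ q, Measurable (Np q))
    (hindep : iIndepFun Np μ)
    (F : Fin K → ℝ → ℝ → ℝ) (hF : ∀ k, Measurable (Function.uncurry (F k)))
    (l : ℝ) (s : Finset (Fin K)) :
    mgf (fun ω => ∑ k ∈ s, F k (Np (k,0) ω) (Np (k,1) ω)) μ l
      = ∏ k ∈ s, mgf (fun ω => F k (Np (k,0) ω) (Np (k,1) ω)) μ l := by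
  classical
  induction s using Finset.induction_on with
  | empty =>
      simp only [Finset.sum_empty, Finset.prod_empty]
      have : (fun _ : Ω => (0:ℝ)) = (0 : Ω → ℝ) := rfl
      rw [this, mgf_zero_fun]
      simp
  | @insert i s' hi ih =>
      set S : Finset (Fin K × Fin 2) := {(i,0), (i,1)} with hS
      set T : Finset (Fin K × Fin 2) := s' ×ˢ (Finset.univ : Finset (Fin 2)) with hT
      have hST : Disjoint S T := by
        rw [Finset.disjoint_left]
        intro q hq hq'
        have h1 : q.1 = i := by
          rcases Finset.mem_insert.1 hq with h | h
          · rw [h]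
          · rw [Finset.mem_singleton.1 h]
        have h2 : q.1 ∈ s' := (Finset.mem_product.1 hq').1
        rw [h1] at h2; exact hi h2
      have hblock := hindep.indepFun_finset S T hST hmeas
      have hmem0 : ((i,0) : Fin K × Fin 2) ∈ S := Finset.mem_insert_self _ _
      have hmem1 : ((i,1) : Fin K × Fin 2) ∈ S :=
        Finset.mem_insert_of_mem (Finset.mem_singleton_self _)
      set φ : ((q : S) → ℝ) → ℝ := fun g => F i (g ⟨(i,0), hmem0⟩) (g ⟨(i,1), hmem1⟩) with hφ
      set ψ : ((q : T) → ℝ) → ℝ := fun g =>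
        ∑ k ∈ s'.attach, F k.1 (g ⟨(k.1,0), Finset.mem_product.2 ⟨k.2, Finset.mem_univ _⟩⟩)
          (g ⟨(k.1,1), Finset.mem_product.2 ⟨k.2, Finset.mem_univ _⟩⟩) with hψ
      have hφm : Measurable φ := by
        apply Measurable.comp (hF i) (f := fun g : (q : S) → ℝ => (g ⟨(i,0), hmem0⟩, g ⟨(i,1), hmem1⟩))
        exact (measurable_pi_apply _).prodMk (measurable_pi_apply _)
      have hψm : Measurable ψ := by
        refine Finset.measurable_sum _ (fun k _ => ?_)
        exact Measurable.comp (hF k.1)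
          (f := fun g : (q : T) → ℝ => (g ⟨(k.1,0), Finset.mem_product.2 ⟨k.2, Finset.mem_univ _⟩⟩,
            g ⟨(k.1,1), Finset.mem_product.2 ⟨k.2, Finset.mem_univ _⟩⟩))
          ((measurable_pi_apply _).prodMk (measurable_pi_apply _))
      have hIndep2 : IndepFun (fun ω => F i (Np (i,0) ω) (Np (i,1) ω))
          (fun ω => ∑ k ∈ s', F k (Np (k,0) ω) (Np (k,1) ω)) μ := by
        have := hblock.comp hφm hψm
        have e1 : (φ ∘ fun a (q : S) => Np q a)
            = fun ω => F i (Np (i,0) ω) (Np (i,1) ω) := rfl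
        have e2 : (ψ ∘ fun a (q : T) => Np q a)
            = fun ω => ∑ k ∈ s', F k (Np (k,0) ω) (Np (k,1) ω) := by
          funext a
          simp only [Function.comp_apply, hψ]
          exact Finset.sum_attach s' (fun k => F k (Np (k,0) a) (Np (k,1) a))
        rwa [e1, e2] at this
      have hsum : (fun ω => ∑ k ∈ insert i s', F k (Np (k,0) ω) (Np (k,1) ω))
          = (fun ω => F i (Np (i,0) ω) (Np (i,1) ω))
            + (fun ω => ∑ k ∈ s', F k (Np (k,0) ω) (Np (k,1) ω)) := by
        funext ω
        simp [Finset.sum_insert hi]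
      rw [hsum, hIndep2.mgf_add'
          ((hF i).comp ((hmeas (i,0)).prodMk (hmeas (i,1)))).aestronglyMeasurable
          (Finset.measurable_sum _ (fun k _ =>
            (hF k).comp ((hmeas (k,0)).prodMk (hmeas (k,1))))).aestronglyMeasurable,
        ih, Finset.prod_insert hi]

lemma integrable_of_bdd'' {Ω : Type} [MeasurableSpace Ω] {μ : Measure Ω} [IsFiniteMeasure μ]
    {f : Ω → ℝ} (hm : Measurable f) {C : ℝ} (hC : ∀ ω, |f ω| ≤ C) : Integrable f μ :=
  ⟨hm.aestronglyMeasurable, MeasureTheory.HasFiniteIntegral.of_bounded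
    (C := C) (Filter.Eventually.of_forall (fun ω => by simpa using hC ω))⟩

lemma integral_sin_mul_sub_eq_zero {Ω : Type} [MeasurableSpace Ω] {μ : Measure Ω}
    [IsProbabilityMeasure μ] {a b : Ω → ℝ} (ha : Measurable a) (hb : Measurable b)
    (hab : IndepFun a b μ) {ν : Measure ℝ}
    (hla : Measure.map a μ = ν) (hlb : Measure.map b μ = ν) (t : ℝ) :
    ∫ ω, Real.sin (t * (a ω - b ω)) ∂μ = 0 := by
  have e : (fun ω => Real.sin (t * (a ω - b ω)))
      = (fun ω => Real.sin (t * a ω) * Real.cos (t * b ω))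
        - (fun ω => Real.cos (t * a ω) * Real.sin (t * b ω)) := by
    funext ω
    simp only [Pi.sub_apply]
    rw [mul_sub, Real.sin_sub]
  have hsa : Measurable fun ω => Real.sin (t * a ω) := (ha.const_mul t).sin
  have hsb : Measurable fun ω => Real.sin (t * b ω) := (hb.const_mul t).sin
  have hca : Measurable fun ω => Real.cos (t * a ω) := (ha.const_mul t).cos
  have hcb : Measurable fun ω => Real.cos (t * b ω) := (hb.const_mul t).cos
  have hind1 : IndepFun (fun ω => Real.sin (t * a ω)) (fun ω => Real.cos (t * b ω)) μ :=
    hab.comp (Measurable.sin (measurable_id.const_mul t)) (Measurable.cos (measurable_id.const_mul t))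
  have hind2 : IndepFun (fun ω => Real.cos (t * a ω)) (fun ω => Real.sin (t * b ω)) μ :=
    hab.comp (Measurable.cos (measurable_id.const_mul t)) (Measurable.sin (measurable_id.const_mul t))
  have hint1 : Integrable (fun ω => Real.sin (t * a ω) * Real.cos (t * b ω)) μ :=
    integrable_of_bdd'' (hsa.mul hcb) (C := 1) (fun ω => by
      rw [abs_mul]
      calc |Real.sin (t*a ω)| * |Real.cos (t*b ω)| ≤ 1 * 1 := by
            gcongr
            · exact Real.abs_sin_le_one _
            · exact Real.abs_cos_le_one _
        _ = 1 := by norm_num)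
  have hint2 : Integrable (fun ω => Real.cos (t * a ω) * Real.sin (t * b ω)) μ :=
    integrable_of_bdd'' (hca.mul hsb) (C := 1) (fun ω => by
      rw [abs_mul]
      calc |Real.cos (t*a ω)| * |Real.sin (t*b ω)| ≤ 1 * 1 := by
            gcongr
            · exact Real.abs_cos_le_one _
            · exact Real.abs_sin_le_one _
        _ = 1 := by norm_num)
  have m1 : ∫ ω, Real.sin (t * a ω) * Real.cos (t * b ω) ∂μ
      = (∫ ω, Real.sin (t * a ω) ∂μ) * ∫ ω, Real.cos (t * b ω) ∂μ :=
    hind1.integral_fun_mul_eq_mul_integral hsa.aestronglyMeasurable hcb.aestronglyMeasurable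
  have m2 : ∫ ω, Real.cos (t * a ω) * Real.sin (t * b ω) ∂μ
      = (∫ ω, Real.cos (t * a ω) ∂μ) * ∫ ω, Real.sin (t * b ω) ∂μ :=
    hind2.integral_fun_mul_eq_mul_integral hca.aestronglyMeasurable hsb.aestronglyMeasurable
  simp_rw [mul_sub, Real.sin_sub]
  rw [integral_sub hint1 hint2, m1, m2]
  have maps : ∀ (f : Ω → ℝ), Measurable f → Measure.map f μ = ν →
      ((∫ ω, Real.sin (t * f ω) ∂μ = ∫ x, Real.sin (t * x) ∂ν)
       ∧ (∫ ω, Real.cos (t * f ω) ∂μ = ∫ x, Real.cos (t * x) ∂ν)) := by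
    intro f hf hmap
    constructor
    · rw [← hmap, integral_map hf.aemeasurable]
      exact ((measurable_id.const_mul t).sin).aestronglyMeasurable
    · rw [← hmap, integral_map hf.aemeasurable]
      exact ((measurable_id.const_mul t).cos).aestronglyMeasurable
  rw [(maps a ha hla).1, (maps a ha hla).2, (maps b hb hlb).1, (maps b hb hlb).2]
  ring

lemma grid_cover {Λ : ℝ} (hΛ : 0 < Λ) {NN : ℕ} (hNN : 0 < NN) {t : ℝ}
    (ht1 : -Λ ≤ t) (ht2 : t ≤ Λ) :
    ∃ j : ℕ, j < NN ∧ |t - (-Λ + (2*(j:ℝ)+1)*Λ/NN)| ≤ Λ/NN := by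
  have hNR : (0:ℝ) < NN := Nat.cast_pos.2 hNN
  set y : ℝ := (t + Λ) * NN / (2*Λ) with hy
  have hy0 : 0 ≤ y := div_nonneg (mul_nonneg (by linarith) (le_of_lt hNR)) (by linarith)
  have hyN : y ≤ NN := by
    rw [hy, div_le_iff₀ (by linarith)]
    nlinarith
  set j0 : ℕ := min (NN-1) (Nat.floor y) with hj0
  have hjlt : j0 < NN := lt_of_le_of_lt (min_le_left _ _) (Nat.pred_lt hNN.ne')
  have hbounds : (j0:ℝ) ≤ y ∧ y ≤ (j0:ℝ) + 1 := by
    by_cases hc : Nat.floor y ≤ NN - 1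
    · have hj : j0 = Nat.floor y := min_eq_right hc
      rw [hj]
      exact ⟨Nat.floor_le hy0, (Nat.lt_floor_add_one y).le⟩
    · push_neg at hc
      have hj : j0 = NN - 1 := min_eq_left hc.le
      have hflo : ((NN:ℝ)) ≤ y := by
        have h1 : NN ≤ Nat.floor y := by omega
        have h2 : (Nat.floor y : ℝ) ≤ y := Nat.floor_le hy0
        calc (NN:ℝ) ≤ (Nat.floor y : ℝ) := by exact_mod_cast h1
          _ ≤ y := h2
      have hcast : ((j0:ℝ)) = (NN:ℝ) - 1 := by
        rw [hj]; rw [Nat.cast_sub hNN]; norm_num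
      rw [hcast]
      constructor <;> linarith
  refine ⟨j0, hjlt, ?_⟩
  have hteq : t = 2*Λ*y/(NN:ℝ) - Λ := by
    rw [hy]; field_simp; ring
  have hdiff : t - (-Λ + (2*(j0:ℝ)+1)*Λ/NN) = (2*(y - j0) - 1) * (Λ/NN) := by
    rw [hteq]; field_simp; ring
  rw [hdiff, abs_le]
  have hpos : 0 < Λ/(NN:ℝ) := by positivity
  obtain ⟨hb1, hb2⟩ := hbounds
  constructor <;> nlinarith

lemma w_bound {τ y d Λ dA : ℝ} (hτ : |τ| ≤ Λ) (hd : |d| ≤ dA) :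
    |(Real.cos (τ*d) - 1) * Real.cos (τ*y)| ≤ Λ^2*dA^2/2 := by
  have h1 : 1 - (τ*d)^2/2 ≤ Real.cos (τ*d) := Real.one_sub_sq_div_two_le_cos
  have h2 : Real.cos (τ*d) ≤ 1 := Real.cos_le_one _
  have h3 : |Real.cos (τ*y)| ≤ 1 := Real.abs_cos_le_one _
  have h4 : (τ*d)^2 ≤ Λ^2*dA^2 := by
    have : |τ*d| ≤ Λ*dA := by
      rw [abs_mul]
      exact mul_le_mul hτ hd (abs_nonneg _) ((abs_nonneg τ).trans hτ)
    nlinarith [abs_nonneg (τ*d), sq_abs (τ*d)]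
  have h5 : |Real.cos (τ*d) - 1| ≤ Λ^2*dA^2/2 := by
    rw [abs_le]; constructor <;> nlinarith
  calc |(Real.cos (τ*d) - 1) * Real.cos (τ*y)|
      = |Real.cos (τ*d) - 1| * |Real.cos (τ*y)| := abs_mul _ _
    _ ≤ (Λ^2*dA^2/2) * 1 := by
        apply mul_le_mul h5 h3 (abs_nonneg _) (by positivity)
    _ = Λ^2*dA^2/2 := mul_one _

lemma abs_sin_sub_sin_le' (a b : ℝ) : |Real.sin a - Real.sin b| ≤ |a - b| := by
  rw [Real.sin_sub_sin]
  have h1 : |Real.sin ((a-b)/2)| ≤ |(a-b)/2| := Real.abs_sin_le_abs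
  have h2 : |Real.cos ((a+b)/2)| ≤ 1 := Real.abs_cos_le_one _
  have h3 : |(a-b)/2| = |a-b|/2 := by rw [abs_div]; norm_num
  have h4 : |2 * Real.sin ((a-b)/2) * Real.cos ((a+b)/2)|
      = 2 * |Real.sin ((a-b)/2)| * |Real.cos ((a+b)/2)| := by
    rw [abs_mul, abs_mul]; norm_num
  rw [h4]
  nlinarith [abs_nonneg (Real.sin ((a-b)/2)), abs_nonneg (Real.cos ((a+b)/2))]

lemma cosdiff_identity (t d y : ℝ) :
    Real.cos (t*(d+y)) - Real.cos (t*y)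
      = -(Real.sin (t*d)) * Real.sin (t*y) + (Real.cos (t*d) - 1) * Real.cos (t*y) := by
  have : t*(d+y) = t*d + t*y := by ring
  rw [this, Real.cos_add]; ring

lemma cosdiff_prod (t d y : ℝ) :
    Real.cos (t*(d+y)) - Real.cos (t*y)
      = -2 * Real.sin (t*(y+d/2)) * Real.sin (t*(d/2)) := by
  rw [Real.cos_sub_cos]
  congr 2
  · ring
  · ring

lemma lip_bound {t τ y d Λ dN dA : ℝ} (hΛ : 0 ≤ Λ) (ht : |t| ≤ Λ) (hτ : |τ| ≤ Λ)
    (hy : |y| ≤ dN) (hd : |d| ≤ dA) :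
    |(Real.cos (t*(d+y)) - Real.cos (t*y)) - (Real.cos (τ*(d+y)) - Real.cos (τ*y))|
      ≤ Λ*dA*(2*dN+dA)*|t-τ| := by
  have hdN : 0 ≤ dN := (abs_nonneg y).trans hy
  have hdA : 0 ≤ dA := (abs_nonneg d).trans hd
  rw [cosdiff_prod t d y, cosdiff_prod τ d y]
  set c := y + d/2 with hc
  set e := d/2 with he
  have hcb : |c| ≤ dN + dA/2 := by
    calc |c| ≤ |y| + |d/2| := abs_add_le _ _
      _ ≤ dN + dA/2 := by
          have : |d/2| = |d|/2 := by rw [abs_div]; norm_num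
          rw [this]; linarith
  have hcb' : |c| ≤ dN + dA/2 := hcb
  have heb : |e| ≤ dA/2 := by
    have : |e| = |d|/2 := by rw [he, abs_div]; norm_num
    rw [this]; linarith
  have h1 : |Real.sin (t*c) - Real.sin (τ*c)| ≤ (dN + dA/2) * |t-τ| := by
    calc |Real.sin (t*c) - Real.sin (τ*c)| ≤ |t*c - τ*c| := abs_sin_sub_sin_le' _ _
      _ = |c| * |t-τ| := by rw [show t*c - τ*c = c*(t-τ) by ring, abs_mul]
      _ ≤ (dN + dA/2) * |t-τ| := by gcongr
  have h2 : |Real.sin (t*e)| ≤ Λ * (dA/2) := by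
    calc |Real.sin (t*e)| ≤ |t*e| := Real.abs_sin_le_abs
      _ = |t| * |e| := abs_mul _ _
      _ ≤ Λ * (dA/2) := mul_le_mul ht heb (abs_nonneg _) hΛ
  have h3 : |Real.sin (τ*c)| ≤ Λ * (dN + dA/2) := by
    calc |Real.sin (τ*c)| ≤ |τ*c| := Real.abs_sin_le_abs
      _ = |τ| * |c| := abs_mul _ _
      _ ≤ Λ * (dN + dA/2) := mul_le_mul hτ hcb (abs_nonneg _) hΛ
  have h4 : |Real.sin (t*e) - Real.sin (τ*e)| ≤ (dA/2) * |t-τ| := by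
    calc |Real.sin (t*e) - Real.sin (τ*e)| ≤ |t*e - τ*e| := abs_sin_sub_sin_le' _ _
      _ = |e| * |t-τ| := by rw [show t*e - τ*e = e*(t-τ) by ring, abs_mul]
      _ ≤ (dA/2) * |t-τ| := by gcongr
  set s1 := Real.sin (t*c)
  set s2 := Real.sin (t*e)
  set s3 := Real.sin (τ*c)
  set s4 := Real.sin (τ*e)
  have key : |s1*s2 - s3*s4| ≤ |s1-s3| * |s2| + |s3| * |s2-s4| := by
    calc |s1*s2 - s3*s4| = |(s1-s3)*s2 + s3*(s2-s4)| := by ring_nf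
      _ ≤ |(s1-s3)*s2| + |s3*(s2-s4)| := abs_add_le _ _
      _ = |s1-s3| * |s2| + |s3| * |s2-s4| := by rw [abs_mul, abs_mul]
  have expand : |-2 * s1 * s2 - -2 * s3 * s4| = 2 * |s1*s2 - s3*s4| := by
    rw [show -2*s1*s2 - -2*s3*s4 = (-2) * (s1*s2 - s3*s4) by ring, abs_mul]
    norm_num
  rw [expand]
  have habs : 0 ≤ |t-τ| := abs_nonneg _
  nlinarith [abs_nonneg (s1-s3), abs_nonneg s3, abs_nonneg s2, abs_nonneg (s2-s4),
    mul_le_mul h1 h2 (abs_nonneg _) (by positivity : (0:ℝ) ≤ (dN+dA/2)*|t-τ|),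
    mul_le_mul h3 h4 (abs_nonneg _) (by positivity : (0:ℝ) ≤ Λ*(dN+dA/2))]


/-- Lemma D.9 (uniform closeness of the data-based and noise-based characteristic-function
estimators).  Conditioned on the latent features, the signal differences `ΔA k` across the
`K` triples of `T_i` are deterministic reals with maximal modulus `dA`; the bound is stated
on the event that every noise difference is at most `dN` in modulus (the quantity `ΔN` of
the paper). -/
theorem sup_noise
    {Ω : Type} [MeasurableSpace Ω] (μ : Measure Ω) [IsProbabilityMeasure μ]
    (K : ℕ) (hK : 0 < K)
    (ν : Measure ℝ) [IsProbabilityMeasure ν]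
    -- the 2K noise variables are i.i.d., symmetric, mean zero
    (Np : Fin K × Fin 2 → Ω → ℝ)
    (hN_meas : ∀ q, Measurable (Np q))
    (hN_law : ∀ q, Measure.map (Np q) μ = ν)
    (hν_symm : Measure.map (fun x => -x) ν = ν)
    (hν_mean : ∫ x, x ∂ν = 0)
    (hindep : iIndepFun Np μ)
    -- the (conditionally deterministic) signal differences over the triples, and their max
    (ΔA : Fin K → ℝ)
    (dA : ℝ) (hdA : IsGreatest (Set.range fun k => |ΔA k|) dA)
    -- the data-based and noise-based characteristic-function estimators
    (phiHat phiStar : ℝ → Ω → ℝ)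
    (hphiHat : ∀ t ω, phiHat t ω
      = Real.sqrt |(1/(K:ℝ)) * ∑ k, Real.cos (t * (ΔA k + (Np (k, 0) ω - Np (k, 1) ω)))|)
    (hphiStar : ∀ t ω, phiStar t ω
      = Real.sqrt |(1/(K:ℝ)) * ∑ k, Real.cos (t * (Np (k, 0) ω - Np (k, 1) ω))|)
    (Λ : ℝ) (hΛ : 0 < Λ) (NN : ℕ) (hNN : 0 < NN)
    (dN : ℝ) (hdN : 0 ≤ dN)
    (s : ℝ)
    (hs : Real.sqrt (Λ^2*dA/(2*(NN:ℝ)) * (((NN:ℝ)+2)*dA + 4*dN)) < s) :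
    μ ({ω | ∀ k, |Np (k, 0) ω - Np (k, 1) ω| ≤ dN}
        ∩ {ω | s < ⨆ t : Set.Icc (-Λ) Λ, |phiHat ↑t ω - phiStar ↑t ω|})
      ≤ ENNReal.ofReal (2*(NN:ℝ) * Real.exp (-((K:ℝ)/(2*Λ^2*dA^2))
          * (s^2 - Λ^2*dA/(2*(NN:ℝ)) * (((NN:ℝ)+2)*dA + 4*dN))^2)) := by
  classical
  obtain ⟨hmem, hub'⟩ := hdA
  obtain ⟨k0, hk0⟩ := hmem
  have hdA0 : 0 ≤ dA := hk0 ▸ abs_nonneg _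
  have hdAub : ∀ k, |ΔA k| ≤ dA := fun k => hub' ⟨k, rfl⟩
  have hNR : (0:ℝ) < NN := Nat.cast_pos.2 hNN
  have hKR : (0:ℝ) < K := Nat.cast_pos.2 hK
  set Δ : ℝ := Λ^2*dA/(2*(NN:ℝ)) * (((NN:ℝ)+2)*dA + 4*dN) with hΔdef
  have hΔ0 : 0 ≤ Δ := by
    rw [hΔdef]
    apply mul_nonneg
    · apply div_nonneg (mul_nonneg (by positivity) hdA0) (by positivity)
    · have : (0:ℝ) ≤ ((NN:ℝ)+2)*dA := mul_nonneg (by positivity) hdA0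
      linarith
  have hs0 : 0 < s := lt_of_le_of_lt (Real.sqrt_nonneg _) hs
  have hu0 : 0 < s^2 - Δ := by
    have h1 : Real.sqrt Δ ^ 2 < s ^ 2 :=
      pow_lt_pow_left₀ hs (Real.sqrt_nonneg _) (by norm_num)
    rw [Real.sq_sqrt hΔ0] at h1
    linarith
  set u : ℝ := s^2 - Δ with hudef
  rcases eq_or_lt_of_le hdA0 with hdAz | hdApos
  · -- degenerate case dA = 0 : the RHS is ≥ 1
    have hexp : -((K:ℝ)/(2*Λ^2*dA^2)) * u^2 = 0 := by
      rw [← hdAz]; norm_num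
    rw [hexp, Real.exp_zero, mul_one]
    calc μ _ ≤ 1 := prob_le_one
      _ ≤ ENNReal.ofReal (2*(NN:ℝ)) := by
          rw [show (1:ℝ≥0∞) = ENNReal.ofReal 1 by simp]
          apply ENNReal.ofReal_le_ofReal
          have : (1:ℝ) ≤ (NN:ℝ) := by exact_mod_cast hNN
          linarith
  · -- main case dA > 0
    set c : ℝ := Λ * dA with hcdef
    have hc : 0 < c := mul_pos hΛ hdApos
    set Y : Fin K → Ω → ℝ := fun k ω => Np (k,0) ω - Np (k,1) ω with hYdef
    have hYm : ∀ k, Measurable (Y k) := fun k => (hN_meas _).sub (hN_meas _)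
    set τ : ℕ → ℝ := fun j => -Λ + (2*(j:ℝ)+1)*Λ/NN with hτdef
    have hτabs : ∀ j, j < NN → |τ j| ≤ Λ := by
      intro j hj
      have hj2 : (2*(j:ℝ)+1) ≤ 2*(NN:ℝ) - 1 := by
        have : (j:ℝ) + 1 ≤ (NN:ℝ) := by exact_mod_cast hj
        linarith
      have hpos : 0 ≤ (2*(j:ℝ)+1)*Λ/NN := by positivity
      have hup : (2*(j:ℝ)+1)*Λ/NN ≤ 2*Λ := by
        rw [div_le_iff₀ hNR]
        nlinarith
      rw [hτdef, abs_le]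
      constructor <;> simp only [] <;> linarith
    set UU : ℝ → ℕ → Fin K → Ω → ℝ :=
      fun σ j k ω => σ * Real.sin (τ j * ΔA k) * Real.sin (τ j * Y k ω) with hUUdef
    have hUm : ∀ σ j k, Measurable (UU σ j k) := fun σ j k =>
      (((hYm k).const_mul (τ j)).sin).const_mul (σ * Real.sin (τ j * ΔA k))
    have hUb : ∀ σ, |σ| = 1 → ∀ j, j < NN → ∀ k ω, |UU σ j k ω| ≤ c := by
      intro σ hσ j hj k ω
      rw [hUUdef]
      simp only []
      rw [abs_mul, abs_mul, hσ, one_mul]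
      calc |Real.sin (τ j * ΔA k)| * |Real.sin (τ j * Y k ω)|
          ≤ |τ j * ΔA k| * 1 := by
            apply mul_le_mul Real.abs_sin_le_abs (Real.abs_sin_le_one _)
              (abs_nonneg _) (abs_nonneg _)
        _ = |τ j| * |ΔA k| := by rw [mul_one, abs_mul]
        _ ≤ Λ * dA := mul_le_mul (hτabs j hj) (hdAub k) (abs_nonneg _) hΛ.le
    have hU0 : ∀ σ j k, ∫ ω, UU σ j k ω ∂μ = 0 := by
      intro σ j k
      have h1 : ∫ ω, UU σ j k ω ∂μ
          = (σ * Real.sin (τ j * ΔA k)) * ∫ ω, Real.sin (τ j * Y k ω) ∂μ := by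
        rw [← integral_const_mul]
      rw [h1, integral_sin_mul_sub_eq_zero (hN_meas (k,0)) (hN_meas (k,1))
        (hindep.indepFun (by simp : ((k,0) : Fin K × Fin 2) ≠ (k,1)))
        (hN_law (k,0)) (hN_law (k,1)), mul_zero]
    have hmgfeq : ∀ σ j (l : ℝ), mgf (fun ω => ∑ k, UU σ j k ω) μ l
        = ∏ k, mgf (UU σ j k) μ l := by
      intro σ j l
      exact mgf_sum_pair hN_meas hindep
        (F := fun k a b => σ * Real.sin (τ j * ΔA k) * Real.sin (τ j * (a - b)))
        (fun k => (((measurable_fst.sub measurable_snd).const_mul (τ j)).sin).const_mul _)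
        l Finset.univ
    have hE : ∀ σ, |σ| = 1 → ∀ j, j < NN →
        μ {ω | (K:ℝ)*u ≤ ∑ k, UU σ j k ω}
          ≤ ENNReal.ofReal (Real.exp (-((K:ℝ)*u^2/(2*c^2)))) := by
      intro σ hσ j hj
      exact chernoff_sum (fun k => hUm σ j k) hc (fun k ω => hUb σ hσ j hj k ω)
        (fun k l => mgf_le_of_bdd (hUm σ j k) hc (fun ω => hUb σ hσ j hj k ω)
          (hU0 σ j k) l)
        (hmgfeq σ j) hu0.le
    -- the deterministic inclusion
    have hincl : ({ω | ∀ k, |Np (k, 0) ω - Np (k, 1) ω| ≤ dN}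
        ∩ {ω | s < ⨆ t : Set.Icc (-Λ) Λ, |phiHat ↑t ω - phiStar ↑t ω|})
        ⊆ ⋃ j ∈ Finset.range NN,
          ({ω | (K:ℝ)*u ≤ ∑ k, UU (-1) j k ω} ∪ {ω | (K:ℝ)*u ≤ ∑ k, UU 1 j k ω}) := by
      rintro ω ⟨hG, hB⟩
      simp only [Set.mem_setOf_eq] at hG hB
      have hGY : ∀ k, |Y k ω| ≤ dN := hG
      haveI : Nonempty (Set.Icc (-Λ) Λ) :=
        Set.Nonempty.to_subtype (Set.nonempty_Icc.2 (by linarith))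
      have havg : ∀ (g : Fin K → ℝ), |(1/(K:ℝ)) * ∑ k, Real.cos (g k)| ≤ 1 := by
        intro g
        rw [abs_mul]
        have h1 : |∑ k, Real.cos (g k)| ≤ (K:ℝ) := by
          calc |∑ k, Real.cos (g k)| ≤ ∑ k, |Real.cos (g k)| :=
                Finset.abs_sum_le_sum_abs _ _
            _ ≤ ∑ _k : Fin K, (1:ℝ) :=
                Finset.sum_le_sum (fun k _ => Real.abs_cos_le_one _)
            _ = (K:ℝ) := by simp
        have h2 : |1/(K:ℝ)| = 1/(K:ℝ) := abs_of_pos (by positivity)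
        rw [h2]
        calc (1/(K:ℝ)) * |∑ k, Real.cos (g k)| ≤ (1/(K:ℝ)) * (K:ℝ) := by
              apply mul_le_mul_of_nonneg_left h1 (by positivity)
          _ = 1 := by field_simp
      have hphiHat01 : ∀ t : ℝ, 0 ≤ phiHat t ω ∧ phiHat t ω ≤ 1 := by
        intro t
        rw [hphiHat]
        exact ⟨Real.sqrt_nonneg _, Real.sqrt_le_one.mpr (havg _)⟩
      have hphiStar01 : ∀ t : ℝ, 0 ≤ phiStar t ω ∧ phiStar t ω ≤ 1 := by
        intro t
        rw [hphiStar]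
        exact ⟨Real.sqrt_nonneg _, Real.sqrt_le_one.mpr (havg _)⟩
      have hbdd : BddAbove (Set.range fun t : Set.Icc (-Λ) Λ =>
          |phiHat ↑t ω - phiStar ↑t ω|) := by
        refine ⟨2, ?_⟩
        rintro x ⟨t, rfl⟩
        obtain ⟨ha1, ha2⟩ := hphiHat01 ↑t
        obtain ⟨hb1, hb2⟩ := hphiStar01 ↑t
        rw [abs_le]; constructor <;> linarith
      obtain ⟨t0, hts⟩ := (lt_ciSup_iff hbdd).1 hB
      obtain ⟨j, hjN, hjτ⟩ := grid_cover hΛ hNN t0.2.1 t0.2.2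
      refine Set.mem_biUnion (Finset.mem_range.2 hjN) ?_
      set t : ℝ := ↑t0 with htdef
      have htabs : |t| ≤ Λ := abs_le.2 ⟨t0.2.1, t0.2.2⟩
      rw [hphiHat, hphiStar] at hts
      set P : ℝ := (1/(K:ℝ)) * ∑ k, Real.cos (t * (ΔA k + (Np (k, 0) ω - Np (k, 1) ω)))
        with hPdef
      set Q : ℝ := (1/(K:ℝ)) * ∑ k, Real.cos (t * (Np (k, 0) ω - Np (k, 1) ω)) with hQdef
      have hPQ : s^2 < |P - Q| := by
        have h1 : s < Real.sqrt |P - Q| :=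
          lt_of_lt_of_le hts (abs_sqrt_sub_sqrt_le P Q)
        exact (Real.lt_sqrt hs0.le).1 h1
      have hsum : P - Q = (1/(K:ℝ)) * ∑ k,
          (Real.cos (t * (ΔA k + Y k ω)) - Real.cos (t * Y k ω)) := by
        rw [hPdef, hQdef, ← mul_sub, ← Finset.sum_sub_distrib]
      have hXbig : (K:ℝ)*s^2 < |∑ k,
          (Real.cos (t * (ΔA k + Y k ω)) - Real.cos (t * Y k ω))| := by
        rw [hsum, abs_mul, abs_of_pos (show (0:ℝ) < 1/(K:ℝ) by positivity)] at hPQ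
        rw [show (1:ℝ)/(K:ℝ) * |∑ k, (Real.cos (t * (ΔA k + Y k ω))
            - Real.cos (t * Y k ω))|
          = |∑ k, (Real.cos (t * (ΔA k + Y k ω)) - Real.cos (t * Y k ω))| / K
          by ring] at hPQ
        rw [lt_div_iff₀ hKR] at hPQ
        linarith [hPQ]
      -- decomposition
      set L : ℝ := Λ*dA*(2*dN+dA) with hLdef
      have hL0 : 0 ≤ L := by
        rw [hLdef]
        apply mul_nonneg (mul_nonneg hΛ.le hdA0) (by linarith)
      have hdecomp : ∀ k, Real.cos (t * (ΔA k + Y k ω)) - Real.cos (t * Y k ω)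
          = ((Real.cos (t * (ΔA k + Y k ω)) - Real.cos (t * Y k ω))
              - (Real.cos (τ j * (ΔA k + Y k ω)) - Real.cos (τ j * Y k ω)))
            + UU (-1) j k ω
            + (Real.cos (τ j * ΔA k) - 1) * Real.cos (τ j * Y k ω) := by
        intro k
        have hid := cosdiff_identity (τ j) (ΔA k) (Y k ω)
        rw [hUUdef]
        simp only []
        rw [hid]; ring
      have hDk : ∀ k, |(Real.cos (t * (ΔA k + Y k ω)) - Real.cos (t * Y k ω))
          - (Real.cos (τ j * (ΔA k + Y k ω)) - Real.cos (τ j * Y k ω))|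
          ≤ L * (Λ/NN) := by
        intro k
        calc |(Real.cos (t * (ΔA k + Y k ω)) - Real.cos (t * Y k ω))
            - (Real.cos (τ j * (ΔA k + Y k ω)) - Real.cos (τ j * Y k ω))|
            ≤ L * |t - τ j| :=
              lip_bound hΛ.le htabs (hτabs j hjN) (hGY k) (hdAub k)
          _ ≤ L * (Λ/NN) := mul_le_mul_of_nonneg_left hjτ hL0
      have hWk : ∀ k, |(Real.cos (τ j * ΔA k) - 1) * Real.cos (τ j * Y k ω)|
          ≤ Λ^2*dA^2/2 := fun k => w_bound (hτabs j hjN) (hdAub k)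
      have hsplit : ∑ k, (Real.cos (t * (ΔA k + Y k ω)) - Real.cos (t * Y k ω))
          = (∑ k, ((Real.cos (t * (ΔA k + Y k ω)) - Real.cos (t * Y k ω))
              - (Real.cos (τ j * (ΔA k + Y k ω)) - Real.cos (τ j * Y k ω))))
            + (∑ k, UU (-1) j k ω)
            + ∑ k, (Real.cos (τ j * ΔA k) - 1) * Real.cos (τ j * Y k ω) := by
        rw [← Finset.sum_add_distrib, ← Finset.sum_add_distrib]
        exact Finset.sum_congr rfl (fun k _ => hdecomp k)
      have hDsum : |∑ k, ((Real.cos (t * (ΔA k + Y k ω)) - Real.cos (t * Y k ω))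
          - (Real.cos (τ j * (ΔA k + Y k ω)) - Real.cos (τ j * Y k ω)))|
          ≤ (K:ℝ) * (L * (Λ/NN)) := by
        calc _ ≤ ∑ k, |(Real.cos (t * (ΔA k + Y k ω)) - Real.cos (t * Y k ω))
            - (Real.cos (τ j * (ΔA k + Y k ω)) - Real.cos (τ j * Y k ω))| :=
              Finset.abs_sum_le_sum_abs _ _
          _ ≤ ∑ _k : Fin K, L * (Λ/NN) := Finset.sum_le_sum (fun k _ => hDk k)
          _ = (K:ℝ) * (L * (Λ/NN)) := by simp [mul_comm]
      have hWsum : |∑ k, (Real.cos (τ j * ΔA k) - 1) * Real.cos (τ j * Y k ω)|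
          ≤ (K:ℝ) * (Λ^2*dA^2/2) := by
        calc _ ≤ ∑ k, |(Real.cos (τ j * ΔA k) - 1) * Real.cos (τ j * Y k ω)| :=
              Finset.abs_sum_le_sum_abs _ _
          _ ≤ ∑ _k : Fin K, Λ^2*dA^2/2 := Finset.sum_le_sum (fun k _ => hWk k)
          _ = (K:ℝ) * (Λ^2*dA^2/2) := by simp [mul_comm]
      have hΔeq : L * (Λ/NN) + Λ^2*dA^2/2 = Δ := by
        rw [hLdef, hΔdef]; field_simp; ring
      have hUbig : (K:ℝ)*u < |∑ k, UU (-1) j k ω| := by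
        have h1 := hXbig
        rw [hsplit] at h1
        have h2 : |(∑ k, ((Real.cos (t * (ΔA k + Y k ω)) - Real.cos (t * Y k ω))
              - (Real.cos (τ j * (ΔA k + Y k ω)) - Real.cos (τ j * Y k ω))))
            + (∑ k, UU (-1) j k ω)
            + ∑ k, (Real.cos (τ j * ΔA k) - 1) * Real.cos (τ j * Y k ω)|
            ≤ (K:ℝ) * (L * (Λ/NN)) + |∑ k, UU (-1) j k ω| + (K:ℝ) * (Λ^2*dA^2/2) := by
          calc _ ≤ |(∑ k, ((Real.cos (t * (ΔA k + Y k ω)) - Real.cos (t * Y k ω))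
              - (Real.cos (τ j * (ΔA k + Y k ω)) - Real.cos (τ j * Y k ω))))
              + (∑ k, UU (-1) j k ω)|
              + |∑ k, (Real.cos (τ j * ΔA k) - 1) * Real.cos (τ j * Y k ω)| :=
                abs_add_le _ _
            _ ≤ _ := by
                have := abs_add_le (∑ k, ((Real.cos (t * (ΔA k + Y k ω))
                    - Real.cos (t * Y k ω))
                    - (Real.cos (τ j * (ΔA k + Y k ω)) - Real.cos (τ j * Y k ω))))
                  (∑ k, UU (-1) j k ω)
                have h3 := hDsum
                have h4 := hWsum
                linarith
        have h5 : (K:ℝ)*s^2 < (K:ℝ) * (L * (Λ/NN)) + |∑ k, UU (-1) j k ω|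
            + (K:ℝ) * (Λ^2*dA^2/2) := lt_of_lt_of_le h1 h2
        have h6 : (K:ℝ) * (L * (Λ/NN)) + (K:ℝ) * (Λ^2*dA^2/2) = (K:ℝ) * Δ := by
          rw [← hΔeq]; ring
        have h7 : (K:ℝ)*(s^2-Δ) = (K:ℝ)*s^2 - (K:ℝ)*Δ := by ring
        rw [hudef]
        linarith [h5, h6, h7]
      rcases lt_abs.1 hUbig with h | h
      · exact Set.mem_union_left _ (le_of_lt h)
      · right
        have hneg : ∑ k, UU 1 j k ω = -∑ k, UU (-1) j k ω := by
          rw [← Finset.sum_neg_distrib]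
          exact Finset.sum_congr rfl (fun k _ => by rw [hUUdef]; simp only []; ring)
        simp only [Set.mem_setOf_eq, hneg]
        exact le_of_lt h
    -- finish with the union bound
    set e : ℝ := Real.exp (-((K:ℝ)*u^2/(2*c^2))) with hedef
    have he0 : 0 ≤ e := Real.exp_nonneg _
    calc μ ({ω | ∀ k, |Np (k, 0) ω - Np (k, 1) ω| ≤ dN}
        ∩ {ω | s < ⨆ t : Set.Icc (-Λ) Λ, |phiHat ↑t ω - phiStar ↑t ω|})
        ≤ μ (⋃ j ∈ Finset.range NN,
          ({ω | (K:ℝ)*u ≤ ∑ k, UU (-1) j k ω} ∪ {ω | (K:ℝ)*u ≤ ∑ k, UU 1 j k ω})) :=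
          measure_mono hincl
      _ ≤ ∑ j ∈ Finset.range NN, μ ({ω | (K:ℝ)*u ≤ ∑ k, UU (-1) j k ω}
          ∪ {ω | (K:ℝ)*u ≤ ∑ k, UU 1 j k ω}) := measure_biUnion_finset_le _ _
      _ ≤ ∑ j ∈ Finset.range NN, (ENNReal.ofReal e + ENNReal.ofReal e) := by
          apply Finset.sum_le_sum
          intro j hj
          have hjN := Finset.mem_range.1 hj
          calc μ _ ≤ μ {ω | (K:ℝ)*u ≤ ∑ k, UU (-1) j k ω}
              + μ {ω | (K:ℝ)*u ≤ ∑ k, UU 1 j k ω} := measure_union_le _ _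
            _ ≤ ENNReal.ofReal e + ENNReal.ofReal e :=
              add_le_add (hE (-1) (by norm_num) j hjN) (hE 1 (by norm_num) j hjN)
      _ = (NN : ℝ≥0∞) * (ENNReal.ofReal e + ENNReal.ofReal e) := by
          rw [Finset.sum_const, Finset.card_range, nsmul_eq_mul]
      _ = ENNReal.ofReal (2*(NN:ℝ) * Real.exp (-((K:ℝ)/(2*Λ^2*dA^2)) * u^2)) := by
          rw [← ENNReal.ofReal_add he0 he0, ← ENNReal.ofReal_natCast NN,
            ← ENNReal.ofReal_mul (by positivity)]
          congr 1
          rw [hedef]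
          have hexpeq : -((K:ℝ)*u^2/(2*c^2)) = -((K:ℝ)/(2*Λ^2*dA^2)) * u^2 := by
            rw [hcdef]
            field_simp
          rw [hexpeq]
          ring
end
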